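/- arXiv:2404.06457 — 5 statements merged into one kernel-verified Lean document; each statement's English description precedes it below -/
import Mathlib

section
/- Let $w \in \mathbb{R}^n$ with $w_i \ge 0$ for all $i$, and let $X_1,\dots,X_n \in [-1,1]$ be exchangeable with $\bar{X} = \frac{1}{n}\sum_{i=1}^n X_i$. Then for any $\lambda \in \mathbb{R}$, $\mathbb{E}[\exp\{\lambda \sum_{i=1}^n w_i(X_i - \bar{X})\}] \le \exp\{\frac{\lambda^2}{2}\|w\|_2^2\}$. -/
/-!
By exchangeability, the expectation is unchanged when the coordinates are permuted, so it equals
the expectation of the average over all permutations `σ`. For a fixed outcome `x ∈ [-1, 1]ⁿ`,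
`x ∘ σ` with `σ` uniform is sampling without replacement from `{x₁, …, xₙ}`. As the weights are
nonnegative, the factors `exp (l wᵢ (x_{σ i} - x̄))` are all monotone in `l x_{σ i}`, and for
such factors sampling without replacement is dominated by sampling with replacement: the average
over permutations of the product is at most the product of the averages (induction on the number
of factors, using Chebyshev's sum inequality). Each of these averages is the moment generating
function of a centred variable with values in an interval of length 2, so Hoeffding's lemma
bounds it by `exp (l² wᵢ² / 2)`.
-/

open MeasureTheory ProbabilityTheory Finset Equiv

lemma integral_uniformOn_univ {ι : Type*} [Fintype ι] [MeasurableSpace ι]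
    [DiscreteMeasurableSpace ι] (g : ι → ℝ) :
    ∫ j, g j ∂uniformOn (Set.univ : Set ι) = (Fintype.card ι : ℝ)⁻¹ * ∑ j, g j := by
  rw [integral_fintype .of_finite, Finset.mul_sum]
  simp [measureReal_def, uniformOn_univ, ENNReal.toReal_inv]

lemma sum_exp_mul_sub_mean_le {ι : Type*} [Fintype ι] {x : ι → ℝ} {a b : ℝ}
    (hx : ∀ j, x j ∈ Set.Icc a b) (t : ℝ) :
    ∑ j, Real.exp (t * (x j - (Fintype.card ι : ℝ)⁻¹ * ∑ k, x k)) ≤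
      Fintype.card ι * Real.exp ((b - a) ^ 2 / 8 * t ^ 2) := by
  cases isEmpty_or_nonempty ι
  · simp
  let _ : MeasurableSpace ι := ⊤
  have _ : DiscreteMeasurableSpace ι := ⟨fun _ => trivial⟩
  have := (hasSubgaussianMGF_of_mem_Icc (μ := uniformOn (Set.univ : Set ι)) (X := x)
    (a := a) (b := b) (measurable_of_finite _).aemeasurable (ae_of_all _ hx)).mgf_le t
  simp only [mgf, integral_uniformOn_univ] at this
  rw [inv_mul_le_iff₀ (by positivity)] at this
  refine this.trans_eq ?_
  congr 2
  push_cast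
  rw [Real.norm_eq_abs, div_pow, sq_abs]
  ring

section SamplingWithoutReplacement

variable {ι α : Type*} [Fintype ι] [DecidableEq ι] [LinearOrder α]
  {x : ι → α} {g : ι → α → ℝ}

omit [LinearOrder α] in
lemma sum_perm_prod_insert {M : Type*} [CommSemiring M] (f : ι → ι → M) {s : Finset ι} {a : ι}
    (ha : a ∉ s) :
    ∑ σ : Perm ι, ∏ i ∈ insert a s, f i (σ i) =
      ∑ j, f a j * ∑ σ : Perm ι with σ a = j, ∏ i ∈ s, f i (σ i) := by
  rw [← sum_fiberwise univ (fun σ : Perm ι => σ a)]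
  refine sum_congr rfl fun j _ => ?_
  rw [mul_sum]
  refine sum_congr rfl fun σ hσ => ?_
  rw [prod_insert ha, (mem_filter.1 hσ).2]

lemma sum_perm_fiber_prod_antitone (hg0 : ∀ i y, 0 ≤ g i y) (hg : ∀ i, Monotone (g i))
    {s : Finset ι} {a : ι} (ha : a ∉ s) {j j' : ι} (hjj' : x j ≤ x j') :
    ∑ σ : Perm ι with σ a = j', ∏ i ∈ s, g i (x (σ i)) ≤
      ∑ σ : Perm ι with σ a = j, ∏ i ∈ s, g i (x (σ i)) := by
  -- `σ ↦ swap j j' * σ` maps the fibre over `j` onto the fibre over `j'`; on `s` it only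
  -- replaces the value `j'` by `j`, which lowers `x`.
  have hreindex := Equiv.sum_comp (Equiv.mulLeft (swap j j'))
    fun σ : Perm ι => if σ a = j' then ∏ i ∈ s, g i (x (σ i)) else 0
  simp only [sum_filter, ← hreindex, coe_mulLeft, Perm.mul_apply]
  refine sum_le_sum fun σ _ => ?_
  simp only [swap_apply_eq_iff, swap_apply_right]
  split_ifs with hσ
  · refine prod_le_prod (fun i _ => hg0 _ _) fun i hi => hg i ?_
    have hσi : σ i ≠ j := fun h => (ne_of_mem_of_not_mem hi ha) (σ.injective (h.trans hσ.symm))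
    rcases eq_or_ne (σ i) j' with h | h
    · rw [h, swap_apply_right]; exact hjj'
    · rw [swap_apply_of_ne_of_ne hσi h]
  · exact le_rfl

theorem card_pow_mul_sum_perm_prod_le (x : ι → α) (hg0 : ∀ i y, 0 ≤ g i y)
    (hg : ∀ i, Monotone (g i)) (s : Finset ι) :
    (Fintype.card ι : ℝ) ^ #s * ∑ σ : Perm ι, ∏ i ∈ s, g i (x (σ i)) ≤
      Fintype.card (Perm ι) * ∏ i ∈ s, ∑ j, g i (x j) := by
  induction s using Finset.induction_on with
  | empty => simp
  | @insert a s ha ih =>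
    set h : ι → ℝ := fun j => ∑ σ : Perm ι with σ a = j, ∏ i ∈ s, g i (x (σ i))
    have hanti : Antivary (fun j => g a (x j)) h := fun j j' hlt =>
      hg a (le_of_not_ge fun hx => hlt.not_ge (sum_perm_fiber_prod_antitone hg0 hg ha hx))
    have hsum_fibers : ∑ j, h j = ∑ σ : Perm ι, ∏ i ∈ s, g i (x (σ i)) :=
      sum_fiberwise univ (fun σ : Perm ι => σ a) _
    calc (Fintype.card ι : ℝ) ^ #(insert a s) * ∑ σ : Perm ι, ∏ i ∈ insert a s, g i (x (σ i))
        = (Fintype.card ι : ℝ) ^ #s * (Fintype.card ι * ∑ j, g a (x j) * h j) := by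
          rw [sum_perm_prod_insert (fun i j => g i (x j)) ha, card_insert_of_notMem ha, pow_succ,
            mul_assoc]
      _ ≤ (Fintype.card ι : ℝ) ^ #s * ((∑ j, g a (x j)) * ∑ j, h j) := by
          gcongr ?_ * ?_
          exact hanti.card_mul_sum_le_sum_mul_sum
      _ = (∑ j, g a (x j)) *
            ((Fintype.card ι : ℝ) ^ #s * ∑ σ : Perm ι, ∏ i ∈ s, g i (x (σ i))) := by
          rw [hsum_fibers]; ring
      _ ≤ (∑ j, g a (x j)) * (Fintype.card (Perm ι) * ∏ i ∈ s, ∑ j, g i (x j)) := by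
          gcongr
          exact sum_nonneg fun j _ => hg0 _ _
      _ = Fintype.card (Perm ι) * ∏ i ∈ insert a s, ∑ j, g i (x j) := by
          rw [prod_insert ha]; ring

end SamplingWithoutReplacement

theorem sum_perm_exp_mul_weighted_sum_sub_mean_le {ι : Type*} [Fintype ι] [DecidableEq ι]
    {x : ι → ℝ} {a b : ℝ} (hx : ∀ j, x j ∈ Set.Icc a b) {w : ι → ℝ} (hw : ∀ i, 0 ≤ w i)
    (l : ℝ) :
    ∑ σ : Perm ι, Real.exp (l * ∑ i, w i * (x (σ i) - (Fintype.card ι : ℝ)⁻¹ * ∑ j, x (σ j))) ≤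
      Fintype.card (Perm ι) * Real.exp ((b - a) ^ 2 / 8 * l ^ 2 * ∑ i, w i ^ 2) := by
  set n : ℝ := (Fintype.card ι : ℝ)
  set m : ℝ := n⁻¹ * ∑ j, x j
  set g : ι → ℝ → ℝ := fun i y => Real.exp (w i * (y - l * m))
  have hg : ∀ i, Monotone (g i) := fun i y z hyz =>
    Real.exp_le_exp.2 (mul_le_mul_of_nonneg_left (by linarith) (hw i))
  have hprod : ∀ σ : Perm ι,
      Real.exp (l * ∑ i, w i * (x (σ i) - n⁻¹ * ∑ j, x (σ j))) = ∏ i, g i (l * x (σ i)) := by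
    intro σ
    rw [Equiv.sum_comp σ x, mul_sum, Real.exp_sum]
    exact prod_congr rfl fun i _ => congrArg Real.exp (by ring)
  have hfactor : ∀ i, ∑ j, g i (l * x j) ≤ n * Real.exp ((b - a) ^ 2 / 8 * (l * w i) ^ 2) := by
    intro i
    refine le_of_eq_of_le (sum_congr rfl fun j _ => congrArg Real.exp ?_)
      (sum_exp_mul_sub_mean_le hx (l * w i))
    ring
  have hn_pow : 0 < n ^ Fintype.card ι := by
    rcases (Fintype.card ι).eq_zero_or_pos with h | h
    · simp [n, h]
    · positivity
  refine le_of_mul_le_mul_left ?_ hn_pow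
  calc n ^ Fintype.card ι * ∑ σ : Perm ι,
        Real.exp (l * ∑ i, w i * (x (σ i) - n⁻¹ * ∑ j, x (σ j)))
      = n ^ #(univ : Finset ι) * ∑ σ : Perm ι, ∏ i, g i (l * x (σ i)) := by
        simp only [hprod, card_univ]
    _ ≤ Fintype.card (Perm ι) * ∏ i, ∑ j, g i (l * x j) :=
        card_pow_mul_sum_perm_prod_le (fun k => l * x k) (fun _ _ => (Real.exp_pos _).le) hg univ
    _ ≤ Fintype.card (Perm ι) * ∏ i, (n * Real.exp ((b - a) ^ 2 / 8 * (l * w i) ^ 2)) := by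
        gcongr with i
        exact hfactor i
    _ = n ^ Fintype.card ι *
          (Fintype.card (Perm ι) * Real.exp ((b - a) ^ 2 / 8 * l ^ 2 * ∑ i, w i ^ 2)) := by
        rw [prod_mul_distrib, prod_const, card_univ, ← Real.exp_sum, mul_sum]
        simp only [mul_pow]
        ring_nf

theorem integral_le_of_map_comp_eq {Ω E ι : Type*} [MeasurableSpace Ω] [MeasurableSpace E]
    {P : Measure Ω} [IsProbabilityMeasure P] [Fintype ι] [Nonempty ι] {Y : Ω → E}
    (hY : Measurable Y) {T : ι → E → E} (hT : ∀ k, Measurable (T k))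
    (hmap : ∀ k, P.map (fun ω => T k (Y ω)) = P.map Y) {f : E → ℝ} (hf : Measurable f)
    (hf0 : ∀ y, 0 ≤ f y) {c : ℝ} (hc : ∀ ω, ∑ k, f (T k (Y ω)) ≤ Fintype.card ι * c) :
    ∫ ω, f (Y ω) ∂P ≤ c := by
  have hint : ∀ k, Integrable (fun ω => f (T k (Y ω))) P := fun k =>
    .of_mem_Icc 0 (Fintype.card ι * c) (hf.comp ((hT k).comp hY)).aemeasurable
      (ae_of_all _ fun ω => ⟨hf0 _, (single_le_sum (f := fun k => f (T k (Y ω)))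
        (fun k _ => hf0 _) (mem_univ k)).trans (hc ω)⟩)
  have hinv : ∀ k, ∫ ω, f (T k (Y ω)) ∂P = ∫ ω, f (Y ω) ∂P := fun k => by
    rw [← integral_map (by fun_prop : AEMeasurable (fun ω => T k (Y ω)) P)
      hf.aestronglyMeasurable, hmap k, integral_map hY.aemeasurable hf.aestronglyMeasurable]
  refine le_of_mul_le_mul_left ?_ (Nat.cast_pos.2 Fintype.card_pos : (0 : ℝ) < Fintype.card ι)
  calc (Fintype.card ι : ℝ) * ∫ ω, f (Y ω) ∂P = ∫ ω, ∑ k, f (T k (Y ω)) ∂P := by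
        rw [integral_finsetSum _ fun k _ => hint k]
        simp [hinv]
    _ ≤ ∫ _, Fintype.card ι * c ∂P :=
        integral_mono (integrable_finsetSum _ fun k _ => hint k) (integrable_const _) hc
    _ = Fintype.card ι * c := by simp

/-- Hoeffding-type MGF bound, with no inflation factor, for weighted sums of
exchangeable random variables in `[-1,1]` with nonnegative weights
(Theorem 4 of the paper). -/
theorem hoeffding_mgf_exchangeable_nonneg {Ω : Type*} [MeasurableSpace Ω] (P : Measure Ω)
    [IsProbabilityMeasure P] (n : ℕ) (w : ℕ → ℝ) (hw : ∀ i < n, 0 ≤ w i)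
    (X : ℕ → Ω → ℝ)
    (hmeas : ∀ i, Measurable (X i))
    (hbdd : ∀ i < n, ∀ ω, X i ω ∈ Set.Icc (-1 : ℝ) 1)
    (hexch : ∀ π : Equiv.Perm (Fin n),
      Measure.map (fun ω => fun i : Fin n => X (π i).val ω) P =
        Measure.map (fun ω => fun i : Fin n => X i.val ω) P)
    (l : ℝ) :
    ∫ ω, Real.exp (l * ∑ i ∈ Finset.range n,
        w i * (X i ω - (n : ℝ)⁻¹ * ∑ j ∈ Finset.range n, X j ω)) ∂P ≤
      Real.exp (l ^ 2 / 2 * ∑ i ∈ Finset.range n, (w i) ^ 2) := by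
  simp only [← Fin.sum_univ_eq_sum_range]
  refine integral_le_of_map_comp_eq (Y := fun ω (i : Fin n) => X i ω)
    (T := fun (σ : Perm (Fin n)) y i => y (σ i))
    (f := fun y => Real.exp (l * ∑ i : Fin n, w i * (y i - (n : ℝ)⁻¹ * ∑ j, y j)))
    (by fun_prop) (fun σ => by fun_prop) hexch (by fun_prop) (fun _ => (Real.exp_pos _).le)
    fun ω => ?_
  have hpointwise := sum_perm_exp_mul_weighted_sum_sub_mean_le (fun j : Fin n => hbdd j j.isLt ω)
    (fun i : Fin n => hw i i.isLt) l
  simp only [Fintype.card_fin] at hpointwise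
  convert hpointwise using 3
  ring
end

section
/- Fix $n \ge 1$ and $v \in \mathbb{R}^n$, and let $X_1,\dots,X_n \in [-1,1]$ be exchangeable. Fix $\lambda \in \mathbb{R}$, set $M_0 = 1$ and for $k \in [n]$ define $M_k = \exp\{\lambda \sum_{i=1}^k v_i (X_i - \bar{X}_{\ge i}) - \frac{\lambda^2}{2}\sum_{i=1}^k v_i^2\}$, where $\bar{X}_{\ge i} = \frac{1}{n-i+1}\sum_{j=i}^n X_j$. Then $(M_k)_{k=0}^n$ is a supermartingale with respect to the filtration generated by $\bar{X}, X_1, \dots, X_k$; in particular $\mathbb{E}[M_n] \le 1$. -/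
/-!
Write `𝓕ₖ` for the σ-algebra generated by `X̄` and `X_0, …, X_{k-1}`. Swapping `X_k` with some
`X_j` (`j ≥ k`) changes neither `X̄` nor `X_0, …, X_{k-1}`, so exchangeability gives
`∫_A X_j = ∫_A X_k` for `A ∈ 𝓕ₖ`. Averaging over `j ≥ k` yields `E[X_k | 𝓕ₖ] = X̄_{≥k}`, and
this is `𝓕ₖ`-measurable because `∑_{j ≥ k} X_j = n X̄ - ∑_{j < k} X_j`. The increment
`M_{k+1} / M_k = exp (s (X_k - X̄_{≥k}) - s² / 2)`, with `s = λ v_k`, therefore has conditional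
expectation at most `1` by a conditional Hoeffding lemma. That lemma reduces to the two-point
case: by convexity `exp (s x) ≤ cosh s + x sinh s` on `[-1, 1]`, the right side is affine in `x`,
and `cosh s + μ sinh s` is the moment generating function of the law on `{-1, 1}` with mean `μ`,
to which Hoeffding's lemma applies.
-/

open MeasureTheory

namespace Real

open ProbabilityTheory

theorem cosh_add_mul_sinh_le_exp {t : ℝ} (ht : |t| ≤ 1) (x : ℝ) :
    cosh x + t * sinh x ≤ exp (t * x + x ^ 2 / 2) := by
  obtain ⟨ht₁, ht₂⟩ := abs_le.1 ht
  set p : unitInterval := ⟨(1 + t) / 2, ⟨by linarith, by linarith⟩⟩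
  set sign : Bool → ℝ := fun b => if b then 1 else -1
  have hintegral (f : ℝ → ℝ) :
      ∫ b, f (sign b) ∂Ber(true, false, p) = (1 + t) / 2 * f 1 + (1 - t) / 2 * f (-1) := by
    rw [integral_bernoulliMeasure]
    simp only [p, sign, smul_eq_mul, if_true, Bool.false_eq_true, if_false]
    ring
  have hmean : ∫ b, sign b ∂Ber(true, false, p) = t := by rw [hintegral fun y => y]; ring
  have hoeffding := (hasSubgaussianMGF_of_mem_Icc (X := sign) (a := -1) (b := 1)
    (μ := Ber(true, false, p)) (measurable_of_finite _).aemeasurable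
    (ae_of_all _ fun b => by cases b <;> norm_num [sign])).mgf_le x
  have hc : ((‖(1 : ℝ) - -1‖₊ / 2) ^ 2 : NNReal) = 1 := by ext; norm_num
  rw [mgf, hmean, hintegral fun y => exp (x * (y - t)), hc, NNReal.coe_one, one_mul] at hoeffding
  calc cosh x + t * sinh x
      = exp (t * x) * ((1 + t) / 2 * exp (x * (1 - t)) + (1 - t) / 2 * exp (x * (-1 - t))) := by
        have e₁ : exp (x * (1 - t)) = exp x * exp (-(t * x)) := by rw [← exp_add]; ring_nf
        have e₂ : exp (x * (-1 - t)) = exp (-x) * exp (-(t * x)) := by rw [← exp_add]; ring_nf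
        rw [e₁, e₂, cosh_eq, sinh_eq, exp_neg (t * x)]
        field_simp
        ring
    _ ≤ exp (t * x) * exp (x ^ 2 / 2) := by gcongr
    _ = exp (t * x + x ^ 2 / 2) := (exp_add _ _).symm

end Real

section ConditionalHoeffding

open ProbabilityTheory Real

variable {Ω : Type*} {m m₀ : MeasurableSpace Ω} {P : Measure[m₀] Ω} [IsFiniteMeasure P]

theorem condExp_exp_mul_le (hm : m ≤ m₀) {Y : Ω → ℝ} (hY : Measurable Y)
    (hY₁ : ∀ ω, Y ω ∈ Set.Icc (-1) 1) (x : ℝ) :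
    P[fun ω => exp (x * Y ω) | m] ≤ᵐ[P] fun ω => exp (x * P[Y | m] ω + x ^ 2 / 2) := by
  have hYint : Integrable Y P := .of_mem_Icc (-1) 1 hY.aemeasurable (ae_of_all _ hY₁)
  have hchord : P[fun ω => exp (x * Y ω) | m] ≤ᵐ[P] P[fun ω => cosh x + Y ω * sinh x | m] :=
    condExp_mono (integrable_exp_mul_of_mem_Icc hY.aemeasurable (ae_of_all _ hY₁))
      ((integrable_const _).add (hYint.mul_const _))
      (ae_of_all _ fun ω => by
        simpa only [mul_comm x] using exp_mul_le_cosh_add_mul_sinh (abs_le.2 (hY₁ ω)) x)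
  have hlin : P[fun ω => cosh x + Y ω * sinh x | m] =ᵐ[P]
      fun ω => cosh x + P[Y | m] ω * sinh x := by
    have hsplit : (fun ω => cosh x + Y ω * sinh x) = (fun _ => cosh x) + sinh x • Y := by
      ext ω; simp [mul_comm]
    rw [hsplit]
    filter_upwards [condExp_add (integrable_const (cosh x)) (hYint.smul (sinh x)) m,
      condExp_smul (sinh x) Y m] with ω hadd hsmul
    rw [hadd, Pi.add_apply, hsmul, condExp_const hm]
    simp [mul_comm]
  filter_upwards [hchord, hlin,
    ae_bdd_abs_condExp_of_ae_bdd_abs (m := m) (ae_of_all _ fun ω => abs_le.2 (hY₁ ω))]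
    with ω hchordω hlinω hbddω
  rw [mul_comm x]
  exact (hchordω.trans_eq hlinω).trans (cosh_add_mul_sinh_le_exp hbddω x)

theorem condExp_mul_exp_sub_le (hm : m ≤ m₀) {Z a Y : Ω → ℝ} (hZ : Measurable[m] Z)
    (hZ₀ : 0 ≤ Z) (ha : Measurable[m] a) (hY : Measurable Y) (hY₁ : ∀ ω, Y ω ∈ Set.Icc (-1) 1)
    (hYa : P[Y | m] =ᵐ[P] a) (x : ℝ)
    (hint : Integrable (fun ω => Z ω * exp (x * (Y ω - a ω) - x ^ 2 / 2)) P) :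
    P[fun ω => Z ω * exp (x * (Y ω - a ω) - x ^ 2 / 2) | m] ≤ᵐ[P] Z := by
  set G : Ω → ℝ := fun ω => Z ω * exp (-(x * a ω) - x ^ 2 / 2)
  have hG : StronglyMeasurable[m] G :=
    (hZ.mul (measurable_exp.comp ((ha.const_mul x).neg.sub_const _))).stronglyMeasurable
  have hfactor : (fun ω => Z ω * exp (x * (Y ω - a ω) - x ^ 2 / 2)) =
      G * fun ω => exp (x * Y ω) := by
    ext ω
    rw [Pi.mul_apply, mul_assoc, ← exp_add]
    ring_nf
  rw [hfactor] at hint ⊢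
  filter_upwards [condExp_mul_of_stronglyMeasurable_left hG hint
      (integrable_exp_mul_of_mem_Icc hY.aemeasurable (ae_of_all _ hY₁)),
    condExp_exp_mul_le hm hY hY₁ x, hYa] with ω hpull hhoeffding hYaω
  rw [hpull, Pi.mul_apply]
  calc G ω * P[fun ω => exp (x * Y ω) | m] ω
      ≤ G ω * exp (x * a ω + x ^ 2 / 2) := by
        rw [← hYaω]
        exact mul_le_mul_of_nonneg_left hhoeffding (mul_nonneg (hZ₀ ω) (exp_pos _).le)
    _ = Z ω := by
        rw [mul_assoc, ← exp_add, show -(x * a ω) - x ^ 2 / 2 + (x * a ω + x ^ 2 / 2) = 0 by ring,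
          exp_zero, mul_one]

end ConditionalHoeffding

section Exchangeable

variable {Ω : Type*} {m m₀ : MeasurableSpace Ω} {P : Measure[m₀] Ω}

theorem setIntegral_comp_perm_eq_of_map_eq {ι β : Type*} [MeasurableSpace β] {Y : Ω → ι → ℝ}
    (hY : Measurable Y) {σ : Equiv.Perm ι} (hσ : P.map (fun ω i => Y ω (σ i)) = P.map Y)
    {g : (ι → ℝ) → β} (hg : Measurable g) (hgσ : ∀ y, g (fun i => y (σ i)) = g y) {A : Set Ω}
    (hA : MeasurableSet[MeasurableSpace.comap (fun ω => g (Y ω)) inferInstance] A) (i : ι) :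
    ∫ ω in A, Y ω (σ i) ∂P = ∫ ω in A, Y ω i ∂P := by
  obtain ⟨B, hB, rfl⟩ := hA
  set f : (ι → ℝ) → ℝ := (g ⁻¹' B).indicator fun y => y i
  have hf : Measurable f := (measurable_pi_apply i).indicator (hg hB)
  have hYσ : Measurable fun ω i => Y ω (σ i) := measurable_pi_lambda _ fun i => hY.eval
  have hA : MeasurableSet ((fun ω => g (Y ω)) ⁻¹' B) := (hg.comp hY) hB
  have hpre : (fun ω i => Y ω (σ i)) ⁻¹' (g ⁻¹' B) = (fun ω => g (Y ω)) ⁻¹' B := by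
    ext ω; simp only [Set.mem_preimage, hgσ]
  calc ∫ ω in (fun ω => g (Y ω)) ⁻¹' B, Y ω (σ i) ∂P
      = ∫ ω, f (fun i => Y ω (σ i)) ∂P := by
        rw [← integral_indicator hA, ← hpre]
        exact integral_congr_ae (ae_of_all _ fun ω =>
          Set.indicator_comp_right (g := fun y : ι → ℝ => y i) _)
    _ = ∫ ω, f (Y ω) ∂P := by
        rw [← integral_map hYσ.aemeasurable hf.aestronglyMeasurable, hσ,
          integral_map hY.aemeasurable hf.aestronglyMeasurable]
    _ = ∫ ω in (fun ω => g (Y ω)) ⁻¹' B, Y ω i ∂P := by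
        rw [← integral_indicator hA]
        exact integral_congr_ae (ae_of_all _ fun ω =>
          (Set.indicator_comp_right (g := fun y : ι → ℝ => y i) Y).symm)

theorem condExp_ae_eq_average_of_setIntegral_eq [IsFiniteMeasure P] (hm : m ≤ m₀) {ι : Type*}
    {Z : ι → Ω → ℝ} {s : Finset ι} {k : ι} (hk : k ∈ s) (hZ : ∀ j ∈ s, Integrable (Z j) P)
    (hset : ∀ j ∈ s, ∀ A, MeasurableSet[m] A → ∫ ω in A, Z j ω ∂P = ∫ ω in A, Z k ω ∂P)
    (havg : StronglyMeasurable[m] fun ω => (s.card : ℝ)⁻¹ * ∑ j ∈ s, Z j ω) :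
    P[Z k | m] =ᵐ[P] fun ω => (s.card : ℝ)⁻¹ * ∑ j ∈ s, Z j ω := by
  have havg_int : Integrable (fun ω => (s.card : ℝ)⁻¹ * ∑ j ∈ s, Z j ω) P :=
    (integrable_finsetSum s hZ).const_mul _
  refine (ae_eq_condExp_of_forall_setIntegral_eq hm (hZ k hk)
    (fun _ _ _ => havg_int.integrableOn) (fun A hA _ => ?_) havg.aestronglyMeasurable).symm
  rw [integral_const_mul, integral_finsetSum _ fun j hj => (hZ j hj).integrableOn,
    Finset.sum_congr rfl fun j hj => hset j hj A hA, Finset.sum_const, nsmul_eq_mul,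
    inv_mul_cancel_left₀ (Nat.cast_ne_zero.2 (Finset.card_ne_zero_of_mem hk))]

end Exchangeable

section ExchangeableHoeffding

open Real

variable {Ω : Type*} {m : MeasurableSpace Ω} {P : Measure Ω} {n : ℕ} {X : ℕ → Ω → ℝ}
  {v : ℕ → ℝ} {l : ℝ}

def Exchangeable (P : Measure Ω) (X : ℕ → Ω → ℝ) (n : ℕ) : Prop :=
  ∀ σ : Equiv.Perm (Fin n),
    P.map (fun ω (i : Fin n) => X (σ i) ω) = P.map (fun ω (i : Fin n) => X i ω)

/-- The paper's `X̄_{≥ i+1}`: indices start at `0` here. -/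
noncomputable def tailAverage (X : ℕ → Ω → ℝ) (n i : ℕ) (ω : Ω) : ℝ :=
  ((n : ℝ) - i)⁻¹ * ∑ j ∈ Finset.Ico i n, X j ω

noncomputable abbrev meanPrefixMeasurableSpace (X : ℕ → Ω → ℝ) (n k : ℕ) : MeasurableSpace Ω :=
  MeasurableSpace.comap (fun ω => (n : ℝ)⁻¹ * ∑ j ∈ Finset.range n, X j ω) inferInstance ⊔
    ⨆ i ∈ Finset.range (min k n), MeasurableSpace.comap (X i) inferInstance

noncomputable def hoeffdingProcess (X : ℕ → Ω → ℝ) (v : ℕ → ℝ) (n : ℕ) (l : ℝ) (k : ℕ)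
    (ω : Ω) : ℝ :=
  exp (l * ∑ i ∈ Finset.range (min k n), v i * (X i ω - tailAverage X n i ω) -
    l ^ 2 / 2 * ∑ i ∈ Finset.range (min k n), v i ^ 2)

theorem tailAverage_eq_card_inv_mul_sum {i : ℕ} (hi : i ≤ n) (ω : Ω) :
    tailAverage X n i ω = ((Finset.Ico i n).card : ℝ)⁻¹ * ∑ j ∈ Finset.Ico i n, X j ω := by
  rw [tailAverage, Nat.card_Ico, Nat.cast_sub hi]

theorem tailAverage_mem_Icc (hX : ∀ i < n, ∀ ω, X i ω ∈ Set.Icc (-1) 1) {i : ℕ} (hi : i < n)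
    (ω : Ω) : tailAverage X n i ω ∈ Set.Icc (-1) 1 := by
  have hcard : (0 : ℝ) < (Finset.Ico i n).card := by
    exact_mod_cast Finset.card_pos.2 (Finset.nonempty_Ico.2 hi)
  have hle := Finset.sum_le_card_nsmul (Finset.Ico i n) (fun j => X j ω) 1
    fun j hj => (hX j (Finset.mem_Ico.1 hj).2 ω).2
  have hge := Finset.card_nsmul_le_sum (Finset.Ico i n) (fun j => X j ω) (-1)
    fun j hj => (hX j (Finset.mem_Ico.1 hj).2 ω).1
  rw [nsmul_eq_mul] at hle hge
  rw [tailAverage_eq_card_inv_mul_sum hi.le]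
  constructor
  · rw [le_inv_mul_iff₀ hcard]; linarith
  · rw [inv_mul_le_iff₀ hcard]; linarith

theorem measurable_meanPrefix_of_lt_min {k i : ℕ} (hi : i < min k n) :
    Measurable[meanPrefixMeasurableSpace X n k] (X i) :=
  measurable_iff_comap_le.2 <| le_sup_of_le_right <|
    le_iSup₂ (f := fun i (_ : i ∈ Finset.range (min k n)) =>
      MeasurableSpace.comap (X i) inferInstance) i (Finset.mem_range.2 hi)

theorem measurable_tailAverage {k i : ℕ} (hik : i ≤ k) (hin : i < n) :
    Measurable[meanPrefixMeasurableSpace X n k] (tailAverage X n i) := by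
  have hmean : Measurable[meanPrefixMeasurableSpace X n k]
      fun ω => (n : ℝ)⁻¹ * ∑ j ∈ Finset.range n, X j ω :=
    measurable_iff_comap_le.2 le_sup_left
  have hn : (n : ℝ) ≠ 0 := Nat.cast_ne_zero.2 (by omega)
  have htail : tailAverage X n i = fun ω =>
      ((n : ℝ) - i)⁻¹ * (n * ((n : ℝ)⁻¹ * ∑ j ∈ Finset.range n, X j ω) -
        ∑ j ∈ Finset.range i, X j ω) := by
    ext ω
    rw [tailAverage, Finset.sum_Ico_eq_sub _ hin.le, mul_inv_cancel_left₀ hn]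
  rw [htail]
  exact ((hmean.const_mul _).sub (Finset.measurable_sum _ fun j hj =>
    measurable_meanPrefix_of_lt_min (by have := Finset.mem_range.1 hj; omega))).const_mul _

theorem meanPrefixMeasurableSpace_le (hmeas : ∀ i, Measurable (X i)) (k : ℕ) :
    meanPrefixMeasurableSpace X n k ≤ m :=
  sup_le ((Finset.measurable_sum _ fun j _ => hmeas j).const_mul _).comap_le
    (iSup₂_le fun i _ => (hmeas i).comap_le)

theorem meanPrefixMeasurableSpace_le_comap {k : ℕ} (hk : k < n) :
    meanPrefixMeasurableSpace X n k ≤ MeasurableSpace.comap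
      (fun ω => ((∑ i : Fin n, X i ω), fun i : Fin k => X i ω)) inferInstance := by
  have hT := comap_measurable (m := inferInstanceAs (MeasurableSpace (ℝ × (Fin k → ℝ))))
    fun ω => ((∑ i : Fin n, X i ω), fun i : Fin k => X i ω)
  refine sup_le ?_ (iSup₂_le fun i hi => ?_)
  · have hmean : (fun ω => (n : ℝ)⁻¹ * ∑ j ∈ Finset.range n, X j ω) =
        fun ω => (n : ℝ)⁻¹ * ∑ i : Fin n, X i ω := by
      ext ω; rw [Fin.sum_univ_eq_sum_range (fun i => X i ω)]
    rw [hmean]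
    exact ((measurable_fst.comp hT).const_mul _).comap_le
  · have hik : i < k := by have := Finset.mem_range.1 hi; omega
    exact ((measurable_pi_apply (⟨i, hik⟩ : Fin k)).comp (measurable_snd.comp hT)).comap_le

theorem setIntegral_eq_of_exchangeable (hmeas : ∀ i, Measurable (X i)) (hexch : Exchangeable P X n)
    {k j : ℕ} (hkj : k ≤ j) (hj : j < n) {A : Set Ω}
    (hA : MeasurableSet[meanPrefixMeasurableSpace X n k] A) :
    ∫ ω in A, X j ω ∂P = ∫ ω in A, X k ω ∂P := by
  have hk : k < n := hkj.trans_lt hj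
  set g : (Fin n → ℝ) → ℝ × (Fin k → ℝ) := fun y => (∑ i, y i, fun i => y (Fin.castLE hk.le i))
  have hg : Measurable g := by fun_prop
  have hgσ : ∀ y, g (fun i => y (Equiv.swap ⟨k, hk⟩ ⟨j, hj⟩ i)) = g y := by
    intro y
    refine Prod.ext (Equiv.sum_comp (Equiv.swap _ _) y) (funext fun i => congrArg y ?_)
    have hi : (i : ℕ) < k := i.isLt
    exact Equiv.swap_apply_of_ne_of_ne (Fin.ne_of_val_ne hi.ne)
      (Fin.ne_of_val_ne (show (i : ℕ) ≠ j by omega))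
  simpa using setIntegral_comp_perm_eq_of_map_eq (P := P) (Y := fun ω (i : Fin n) => X i ω)
    (measurable_pi_lambda _ fun i => hmeas i) (hexch _) hg hgσ
    (meanPrefixMeasurableSpace_le_comap hk A hA) ⟨k, hk⟩

theorem condExp_ae_eq_tailAverage [IsFiniteMeasure P] (hmeas : ∀ i, Measurable (X i))
    (hX : ∀ i < n, ∀ ω, X i ω ∈ Set.Icc (-1) 1) (hexch : Exchangeable P X n) {k : ℕ}
    (hk : k < n) :
    P[X k | meanPrefixMeasurableSpace X n k] =ᵐ[P] tailAverage X n k := by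
  have htail := funext (tailAverage_eq_card_inv_mul_sum (X := X) hk.le)
  have havg := (measurable_tailAverage (X := X) le_rfl hk).stronglyMeasurable
  rw [htail] at havg ⊢
  refine condExp_ae_eq_average_of_setIntegral_eq (meanPrefixMeasurableSpace_le hmeas k)
    (Finset.left_mem_Ico.2 hk) (fun j hj => ?_) (fun j hj A hA => ?_) havg
  · exact .of_mem_Icc (-1) 1 (hmeas j).aemeasurable (ae_of_all _ (hX j (Finset.mem_Ico.1 hj).2))
  · exact setIntegral_eq_of_exchangeable hmeas hexch (Finset.mem_Ico.1 hj).1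
      (Finset.mem_Ico.1 hj).2 hA

theorem hoeffdingProcess_zero : hoeffdingProcess X v n l 0 = 1 := by
  ext ω; simp [hoeffdingProcess]

theorem hoeffdingProcess_succ_of_lt {k : ℕ} (hk : k < n) (ω : Ω) :
    hoeffdingProcess X v n l (k + 1) ω = hoeffdingProcess X v n l k ω *
      exp (l * v k * (X k ω - tailAverage X n k ω) - (l * v k) ^ 2 / 2) := by
  rw [hoeffdingProcess, hoeffdingProcess, ← exp_add, min_eq_left hk, min_eq_left hk.le,
    Finset.sum_range_succ, Finset.sum_range_succ]
  ring_nf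

theorem hoeffdingProcess_succ_of_le {k : ℕ} (hk : n ≤ k) :
    hoeffdingProcess X v n l (k + 1) = hoeffdingProcess X v n l k := by
  ext ω
  rw [hoeffdingProcess, hoeffdingProcess, min_eq_right hk, min_eq_right (hk.trans k.le_succ)]

theorem measurable_hoeffdingProcess (k : ℕ) :
    Measurable[meanPrefixMeasurableSpace X n k] (hoeffdingProcess X v n l k) := by
  refine .exp ((Finset.measurable_sum _ fun i hi => ?_).const_mul _ |>.sub_const _)
  have hi := Finset.mem_range.1 hi
  exact ((measurable_meanPrefix_of_lt_min hi).sub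
    (measurable_tailAverage (by omega) (hi.trans_le (min_le_right k n)))).const_mul _

theorem integrable_hoeffdingProcess [IsFiniteMeasure P] (hmeas : ∀ i, Measurable (X i))
    (hX : ∀ i < n, ∀ ω, X i ω ∈ Set.Icc (-1) 1) (k : ℕ) :
    Integrable (hoeffdingProcess X v n l k) P := by
  induction k with
  | zero => rw [hoeffdingProcess_zero]; exact integrable_const 1
  | succ k ih =>
    rcases lt_or_ge k n with hk | hk
    · have hfactor (ω : Ω) :
          ‖exp (l * v k * (X k ω - tailAverage X n k ω) - (l * v k) ^ 2 / 2)‖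
            ≤ exp (|l * v k| * 2) := by
        obtain ⟨hX₁, hX₂⟩ := hX k hk ω
        obtain ⟨hA₁, hA₂⟩ := tailAverage_mem_Icc hX hk ω
        have hdiff : |X k ω - tailAverage X n k ω| ≤ 2 := abs_le.2 ⟨by linarith, by linarith⟩
        rw [norm_of_nonneg (exp_pos _).le, exp_le_exp]
        calc l * v k * (X k ω - tailAverage X n k ω) - (l * v k) ^ 2 / 2
            ≤ |l * v k| * |X k ω - tailAverage X n k ω| := by
              rw [← abs_mul]; nlinarith [le_abs_self (l * v k * (X k ω - tailAverage X n k ω))]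
          _ ≤ |l * v k| * 2 := mul_le_mul_of_nonneg_left hdiff (abs_nonneg _)
      have htail : Measurable (tailAverage X n k) :=
        (measurable_tailAverage le_rfl hk).mono (meanPrefixMeasurableSpace_le hmeas k) le_rfl
      rw [funext (hoeffdingProcess_succ_of_lt hk)]
      refine ih.mul_bdd ?_ (ae_of_all _ hfactor)
      exact (measurable_exp.comp (((hmeas k).sub htail).const_mul _ |>.sub_const _))
        |>.aestronglyMeasurable
    · rwa [hoeffdingProcess_succ_of_le hk]

theorem condExp_hoeffdingProcess_succ_le [IsFiniteMeasure P] (hmeas : ∀ i, Measurable (X i))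
    (hX : ∀ i < n, ∀ ω, X i ω ∈ Set.Icc (-1) 1) (hexch : Exchangeable P X n) (k : ℕ) :
    P[hoeffdingProcess X v n l (k + 1) | meanPrefixMeasurableSpace X n k] ≤ᵐ[P]
      hoeffdingProcess X v n l k := by
  have hle := meanPrefixMeasurableSpace_le (n := n) hmeas k
  have hint := integrable_hoeffdingProcess (P := P) (v := v) (l := l) hmeas hX
  rcases lt_or_ge k n with hk | hk
  · have hsucc := funext (hoeffdingProcess_succ_of_lt (X := X) (v := v) (l := l) hk)
    rw [hsucc]
    exact condExp_mul_exp_sub_le hle (measurable_hoeffdingProcess k) (fun ω => (exp_pos _).le)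
      (measurable_tailAverage le_rfl hk) (hmeas k) (hX k hk)
      (condExp_ae_eq_tailAverage hmeas hX hexch hk) (l * v k) (hsucc ▸ hint (k + 1))
  · rw [hoeffdingProcess_succ_of_le hk, condExp_of_stronglyMeasurable hle
      (measurable_hoeffdingProcess k).stronglyMeasurable (hint k)]

theorem supermartingale_hoeffdingProcess [IsFiniteMeasure P] (hmeas : ∀ i, Measurable (X i))
    (hX : ∀ i < n, ∀ ω, X i ω ∈ Set.Icc (-1) 1) (hexch : Exchangeable P X n)
    {ℱ : Filtration ℕ m} (hℱ : ∀ k, ℱ k = meanPrefixMeasurableSpace X n k) :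
    Supermartingale (hoeffdingProcess X v n l) ℱ P := by
  refine supermartingale_nat (fun k => ?_) (integrable_hoeffdingProcess hmeas hX) fun k => ?_
  · rw [hℱ k]; exact (measurable_hoeffdingProcess k).stronglyMeasurable
  · rw [hℱ k]; exact condExp_hoeffdingProcess_succ_le hmeas hX hexch k

end ExchangeableHoeffding

theorem hoeffding_supermartingale_exchangeable_general {Ω : Type*} {m : MeasurableSpace Ω}
    (P : Measure Ω) [IsProbabilityMeasure P] (n : ℕ) (v : ℕ → ℝ)
    (X : ℕ → Ω → ℝ)
    (hmeas : ∀ i, Measurable (X i))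
    (hbdd : ∀ i < n, ∀ ω, X i ω ∈ Set.Icc (-1 : ℝ) 1)
    (hexch : ∀ π : Equiv.Perm (Fin n),
      Measure.map (fun ω => fun i : Fin n => X (π i).val ω) P =
        Measure.map (fun ω => fun i : Fin n => X i.val ω) P)
    (l : ℝ) (M : ℕ → Ω → ℝ)
    (hM : ∀ k ω, M k ω = Real.exp (l * ∑ i ∈ Finset.range (min k n),
        v i * (X i ω - ((n : ℝ) - i)⁻¹ * ∑ j ∈ Finset.Ico i n, X j ω) -
      l ^ 2 / 2 * ∑ i ∈ Finset.range (min k n), (v i) ^ 2))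
    (ℱ : Filtration ℕ m)
    (hℱ : ∀ k, ℱ k =
      MeasurableSpace.comap (fun ω => (n : ℝ)⁻¹ * ∑ j ∈ Finset.range n, X j ω)
          inferInstance ⊔
        ⨆ i ∈ Finset.range (min k n), MeasurableSpace.comap (X i) inferInstance) :
    Supermartingale M ℱ P ∧ ∫ ω, M n ω ∂P ≤ 1 := by
  obtain rfl : M = hoeffdingProcess X v n l := funext fun k => funext (hM k)
  have hsup := supermartingale_hoeffdingProcess (v := v) (l := l) hmeas hbdd hexch hℱ
  refine ⟨hsup, ?_⟩
  calc ∫ ω, hoeffdingProcess X v n l n ω ∂P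
      ≤ ∫ ω, hoeffdingProcess X v n l 0 ω ∂P := by
        simpa using hsup.setIntegral_le (Nat.zero_le n) MeasurableSet.univ
    _ = 1 := by simp [hoeffdingProcess_zero]

/-- The Hoeffding-type supermartingale of Waudby-Smith and Ramdas for exchangeable
sequences (Proposition 1 of the paper): with `M_k = exp(λ ∑_{i≤k} v_i (X_i - X̄_{≥i})
- (λ²/2) ∑_{i≤k} v_i²)`, the process `(M_k)_{k=0}^n` is a supermartingale with respect
to the filtration generated by `X̄, X_1, …, X_k`, and in particular `E[M_n] ≤ 1`. -/
theorem hoeffding_supermartingale_exchangeable {Ω : Type*} {m : MeasurableSpace Ω}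
    (P : Measure Ω) [IsProbabilityMeasure P] (n : ℕ) (hn : 1 ≤ n) (v : ℕ → ℝ)
    (X : ℕ → Ω → ℝ)
    (hmeas : ∀ i, Measurable (X i))
    (hbdd : ∀ i < n, ∀ ω, X i ω ∈ Set.Icc (-1 : ℝ) 1)
    (hexch : ∀ π : Equiv.Perm (Fin n),
      Measure.map (fun ω => fun i : Fin n => X (π i).val ω) P =
        Measure.map (fun ω => fun i : Fin n => X i.val ω) P)
    (l : ℝ) (M : ℕ → Ω → ℝ)
    (hM : ∀ k ω, M k ω = Real.exp (l * ∑ i ∈ Finset.range (min k n),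
        v i * (X i ω - ((n : ℝ) - i)⁻¹ * ∑ j ∈ Finset.Ico i n, X j ω) -
      l ^ 2 / 2 * ∑ i ∈ Finset.range (min k n), (v i) ^ 2))
    (ℱ : Filtration ℕ m)
    (hℱ : ∀ k, ℱ k =
      MeasurableSpace.comap (fun ω => (n : ℝ)⁻¹ * ∑ j ∈ Finset.range n, X j ω)
          inferInstance ⊔
        ⨆ i ∈ Finset.range (min k n), MeasurableSpace.comap (X i) inferInstance) :
    Supermartingale M ℱ P ∧ ∫ ω, M n ω ∂P ≤ 1 :=
  hoeffding_supermartingale_exchangeable_general P n v X hmeas hbdd hexch l M hM ℱ hℱ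
end

section
/- Fix $n \ge 1$, $v \in \mathbb{R}^n$, and let $X_1,\dots,X_n \in [-1,1]$ be exchangeable. Fix $\lambda$ with $|\lambda| < \frac{3}{2\|v\|_\infty}$. Let $\bar{X}_{\ge i}$ and $\sigma^2_{X_{\ge i}}$ denote the mean and variance of $(X_i,\dots,X_n)$. Define $M_0 = 1$ and $M_k = \exp\{\lambda \sum_{i=1}^k v_i(X_i - \bar{X}_{\ge i}) - \frac{\lambda^2}{2(1 - \frac{2|\lambda|}{3}\|v\|_\infty)}\sum_{i=1}^k v_i^2 \sigma^2_{X_{\ge i}}\}$. Then $(M_k)$ is a supermartingale with respect to the filtration generated by $\bar{X}, \sigma^2_X, X_1, \dots, X_k$, so $\mathbb{E}[M_n] \le 1$. -/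
/-!
Write `𝓕_k` for the σ-algebra generated by `X̄`, `σ²_X` and `X_0, …, X_{k-1}` (indices start at
`0`). It is contained in the σ-algebra of the statistic `(∑ X_i, ∑ X_i², X_0, …, X_{k-1})`, which
does not change when two of `X_k, …, X_{n-1}` are swapped. By exchangeability, `X_k` may therefore
be replaced by any `X_j`, `j ≥ k`, in `∫_A M_{k+1}` for `A ∈ 𝓕_k`; averaging over `j`,
`E[M_{k+1} | 𝓕_k]` is `M_k e^{-κ v_k² σ²_{≥k}}` times the empirical mean of `e^{u_j}`, where
`u_j = λ v_k (X_j - X̄_{≥k})`, `κ = λ² / (2 (1 - c))` and `c = 2 |λ| ‖v‖_∞ / 3`. The `u_j`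
average to zero and satisfy `|u_j| ≤ 3c`, so the Bernstein bound `e^u ≤ 1 + u + u² / (2 (1 - c))`
bounds that mean by `e^{κ v_k² σ²_{≥k}}`.
-/

open MeasureTheory Finset
open scoped Nat

theorem Real.exp_le_one_add_add_sq_div {u c : ℝ} (hc : c < 1) (hu : |u| ≤ 3 * c) :
    Real.exp u ≤ 1 + u + u ^ 2 / (2 * (1 - c)) := by
  have hc0 : 0 ≤ c := by linarith [abs_nonneg u]
  have hsum := Real.summable_pow_div_factorial u
  have hgeom := summable_geometric_of_lt_one hc0 hc
  -- the tail of the exponential series is dominated by a geometric one, as `2 * 3 ^ k ≤ (k + 2)!`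
  have hterm (k : ℕ) : u ^ (k + 2) / (k + 2)! ≤ u ^ 2 / 2 * c ^ k := by
    have hfac : (2 * 3 ^ k : ℝ) ≤ (k + 2)! := by
      have := Nat.factorial_mul_pow_le_factorial (m := 2) (n := k)
      rw [add_comm 2 k] at this
      exact_mod_cast this
    calc u ^ (k + 2) / (k + 2)! ≤ |u| ^ (k + 2) / (2 * 3 ^ k) :=
          div_le_div₀ (by positivity) ((le_abs_self _).trans (abs_pow u _).le) (by positivity) hfac
      _ = u ^ 2 / 2 * (|u| / 3) ^ k := by rw [pow_add, sq_abs, div_pow]; ring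
      _ ≤ u ^ 2 / 2 * c ^ k := by gcongr; linarith
  calc Real.exp u = 1 + u + ∑' k, u ^ (k + 2) / (k + 2)! := by
        rw [Real.exp_eq_exp_ℝ, NormedSpace.exp_eq_tsum_div]
        dsimp only
        rw [← hsum.sum_add_tsum_nat_add 2]
        simp [sum_range_succ]
    _ ≤ 1 + u + ∑' k, u ^ 2 / 2 * c ^ k := by
        gcongr 1 + u + ?_
        exact ((summable_nat_add_iff 2).mpr hsum).tsum_le_tsum hterm (hgeom.mul_left _)
    _ = 1 + u + u ^ 2 / (2 * (1 - c)) := by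
        rw [tsum_mul_left, tsum_geometric_of_lt_one hc0 hc]
        field_simp

theorem two_mul_abs_div_three_mul_lt_one {l a : ℝ} (h : |l| < 3 / (2 * a)) :
    2 * |l| / 3 * a < 1 := by
  have ha : 0 < a := by
    by_contra! ha
    have : 3 / (2 * a) ≤ 0 := div_nonpos_of_nonneg_of_nonpos (by norm_num) (by linarith)
    linarith [abs_nonneg l]
  have := (lt_div_iff₀ (by positivity)).mp h
  linarith

theorem inv_card_mul_sum_exp_le {ι : Type*} {s : Finset ι} {d : ι → ℝ} {c : ℝ} (hc : c < 1)
    (hd : ∀ j ∈ s, |d j| ≤ 3 * c) (hsum : ∑ j ∈ s, d j = 0) :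
    (#s : ℝ)⁻¹ * ∑ j ∈ s, Real.exp (d j) ≤
      Real.exp ((#s : ℝ)⁻¹ * ∑ j ∈ s, d j ^ 2 / (2 * (1 - c))) := by
  have hle : ∑ j ∈ s, Real.exp (d j) ≤ #s + ∑ j ∈ s, d j ^ 2 / (2 * (1 - c)) := by
    calc ∑ j ∈ s, Real.exp (d j) ≤ ∑ j ∈ s, (1 + d j + d j ^ 2 / (2 * (1 - c))) :=
          sum_le_sum fun j hj => Real.exp_le_one_add_add_sq_div hc (hd j hj)
      _ = #s + ∑ j ∈ s, d j ^ 2 / (2 * (1 - c)) := by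
          rw [sum_add_distrib, sum_add_distrib, hsum, sum_const, nsmul_one, add_zero]
  calc (#s : ℝ)⁻¹ * ∑ j ∈ s, Real.exp (d j)
      ≤ (#s : ℝ)⁻¹ * #s + (#s : ℝ)⁻¹ * ∑ j ∈ s, d j ^ 2 / (2 * (1 - c)) := by
        rw [← mul_add]; gcongr
    _ ≤ 1 + (#s : ℝ)⁻¹ * ∑ j ∈ s, d j ^ 2 / (2 * (1 - c)) := by
        gcongr; exact inv_mul_le_one_of_le₀ le_rfl (Nat.cast_nonneg _)
    _ ≤ _ := by linarith [Real.add_one_le_exp ((#s : ℝ)⁻¹ * ∑ j ∈ s, d j ^ 2 / (2 * (1 - c)))]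

theorem Finset.sum_Ico_eq_sum_range_sub_sum_range_min {M : Type*} [AddCommGroup M] (f : ℕ → M)
    (i n : ℕ) : ∑ j ∈ Ico i n, f j = ∑ j ∈ range n, f j - ∑ j ∈ range (min i n), f j := by
  rcases le_total i n with h | h
  · rw [min_eq_left h, sum_Ico_eq_sub _ h]
  · rw [min_eq_right h, Ico_eq_empty_of_le h, sum_empty, sub_self]

-- Both vanish for `i ≥ n`.
noncomputable def tailMean (n : ℕ) (x : ℕ → ℝ) (i : ℕ) : ℝ :=
  ((n : ℝ) - i)⁻¹ * ∑ j ∈ Ico i n, x j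

noncomputable def tailVar (n : ℕ) (x : ℕ → ℝ) (i : ℕ) : ℝ :=
  ((n : ℝ) - i)⁻¹ * ∑ j ∈ Ico i n, (x j - tailMean n x i) ^ 2

section Tail

variable {n : ℕ} {x : ℕ → ℝ}

theorem cast_card_Ico {i : ℕ} (h : i ≤ n) : (#(Ico i n) : ℝ) = n - i := by
  rw [Nat.card_Ico, Nat.cast_sub h]

theorem sum_sub_tailMean_eq_zero (n : ℕ) (x : ℕ → ℝ) (i : ℕ) :
    ∑ j ∈ Ico i n, (x j - tailMean n x i) = 0 := by
  rcases lt_or_ge i n with h | h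
  · have : (n : ℝ) - i ≠ 0 := sub_ne_zero.mpr (by exact_mod_cast h.ne')
    rw [sum_sub_distrib, sum_const, nsmul_eq_mul, cast_card_Ico h.le, tailMean]
    field_simp
    ring
  · simp [Ico_eq_empty_of_le h]

theorem abs_tailMean_le_one (hx : ∀ j < n, |x j| ≤ 1) (i : ℕ) : |tailMean n x i| ≤ 1 := by
  rcases lt_or_ge i n with h | h
  · have hpos : (0 : ℝ) < n - i := sub_pos.mpr (by exact_mod_cast h)
    rw [tailMean, abs_mul, abs_inv, abs_of_pos hpos, inv_mul_le_one₀ hpos]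
    calc |∑ j ∈ Ico i n, x j| ≤ ∑ j ∈ Ico i n, |x j| := abs_sum_le_sum_abs _ _
      _ ≤ ∑ j ∈ Ico i n, 1 := sum_le_sum fun j hj => hx j (mem_Ico.mp hj).2
      _ = n - i := by rw [sum_const, nsmul_one, cast_card_Ico h.le]
  · simp [tailMean, Ico_eq_empty_of_le h]

theorem abs_sub_tailMean_le_two (hx : ∀ j < n, |x j| ≤ 1) {j : ℕ} (hj : j < n) (i : ℕ) :
    |x j - tailMean n x i| ≤ 2 :=
  (abs_sub _ _).trans (by linarith [hx j hj, abs_tailMean_le_one hx i])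

theorem tailVar_nonneg (n : ℕ) (x : ℕ → ℝ) (i : ℕ) : 0 ≤ tailVar n x i := by
  rcases le_or_gt i n with h | h
  · exact mul_nonneg (inv_nonneg.mpr (sub_nonneg.mpr (by exact_mod_cast h)))
      (sum_nonneg fun _ _ => sq_nonneg _)
  · simp [tailVar, Ico_eq_empty_of_le h.le]

theorem tailVar_eq (n : ℕ) (x : ℕ → ℝ) (i : ℕ) :
    tailVar n x i = ((n : ℝ) - i)⁻¹ * ∑ j ∈ Ico i n, x j ^ 2 - tailMean n x i ^ 2 := by
  set μ := tailMean n x i with hμ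
  have hsq : ∑ j ∈ Ico i n, (x j - μ) ^ 2 = ∑ j ∈ Ico i n, x j ^ 2 - μ * ∑ j ∈ Ico i n, x j := by
    have h0 := sum_sub_tailMean_eq_zero n x i
    rw [← hμ] at h0
    calc ∑ j ∈ Ico i n, (x j - μ) ^ 2
        = ∑ j ∈ Ico i n, (x j ^ 2 - μ * x j) - μ * ∑ j ∈ Ico i n, (x j - μ) := by
          rw [mul_sum, ← sum_sub_distrib]; exact sum_congr rfl fun j _ => by ring
      _ = _ := by rw [h0, mul_zero, sub_zero, sum_sub_distrib, mul_sum]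
  rw [tailVar, hsq, mul_sub, hμ, tailMean]
  ring

theorem tailMean_zero (n : ℕ) (x : ℕ → ℝ) : tailMean n x 0 = (n : ℝ)⁻¹ * ∑ j ∈ range n, x j := by
  simp [tailMean]

theorem tailVar_zero (n : ℕ) (x : ℕ → ℝ) : tailVar n x 0 =
    (n : ℝ)⁻¹ * ∑ j ∈ range n, x j ^ 2 - ((n : ℝ)⁻¹ * ∑ j ∈ range n, x j) ^ 2 := by
  rw [tailVar_eq, tailMean_zero]
  simp

theorem sum_range_eq_mul_tailMean_zero (n : ℕ) (x : ℕ → ℝ) :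
    ∑ j ∈ range n, x j = n * tailMean n x 0 := by
  rcases n.eq_zero_or_pos with rfl | hn
  · simp
  · rw [tailMean_zero, mul_inv_cancel_left₀ (by positivity)]

theorem sum_range_sq_eq (n : ℕ) (x : ℕ → ℝ) :
    ∑ j ∈ range n, x j ^ 2 = n * (tailVar n x 0 + tailMean n x 0 ^ 2) := by
  rcases n.eq_zero_or_pos with rfl | hn
  · simp
  · rw [tailVar_zero, tailMean_zero, sub_add_cancel, mul_inv_cancel_left₀ (by positivity)]

theorem inv_mul_sum_exp_sub_tailMean_le (hx : ∀ j < n, |x j| ≤ 1) {c t : ℝ} (hc : c < 1)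
    (ht : 2 * |t| ≤ 3 * c) (k : ℕ) :
    ((n : ℝ) - k)⁻¹ * ∑ j ∈ Ico k n, Real.exp (t * (x j - tailMean n x k)) ≤
      Real.exp (t ^ 2 * tailVar n x k / (2 * (1 - c))) := by
  rcases lt_or_ge k n with h | h
  · have key := inv_card_mul_sum_exp_le (s := Ico k n) (d := fun j => t * (x j - tailMean n x k))
      hc (fun j hj => ?_) (by rw [← mul_sum, sum_sub_tailMean_eq_zero, mul_zero])
    · rw [cast_card_Ico h.le] at key
      convert key using 2
      rw [tailVar, mul_sum, mul_sum, sum_div, mul_sum]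
      refine sum_congr rfl fun j _ => by ring
    · rw [abs_mul]
      nlinarith [abs_sub_tailMean_le_two hx (mem_Ico.mp hj).2 k, abs_nonneg t]
  · simp only [Ico_eq_empty_of_le h, sum_empty, mul_zero]
    positivity

end Tail

noncomputable def bernsteinProcess (n : ℕ) (v : ℕ → ℝ) (l κ : ℝ) (k : ℕ) (x : ℕ → ℝ) : ℝ :=
  Real.exp (l * ∑ i ∈ range (min k n), v i * (x i - tailMean n x i) -
    κ * ∑ i ∈ range (min k n), v i ^ 2 * tailVar n x i)

section BernsteinProcess

variable {n : ℕ} {v : ℕ → ℝ} {l κ : ℝ} {x : ℕ → ℝ}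

theorem bernsteinProcess_pos (k : ℕ) : 0 < bernsteinProcess n v l κ k x :=
  Real.exp_pos _

theorem bernsteinProcess_zero : bernsteinProcess n v l κ 0 x = 1 := by
  simp [bernsteinProcess]

theorem bernsteinProcess_succ_of_le {k : ℕ} (h : n ≤ k) :
    bernsteinProcess n v l κ (k + 1) x = bernsteinProcess n v l κ k x := by
  rw [bernsteinProcess, bernsteinProcess, min_eq_right h, min_eq_right (h.trans k.le_succ)]

-- `bernsteinProcess n v l κ (k + 1) x` with `x k` replaced by `x j` in its last factor
noncomputable def bernsteinProcessStep (n : ℕ) (v : ℕ → ℝ) (l κ : ℝ) (k j : ℕ) (x : ℕ → ℝ) : ℝ :=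
  bernsteinProcess n v l κ k x *
    Real.exp (l * v k * (x j - tailMean n x k) - κ * v k ^ 2 * tailVar n x k)

theorem bernsteinProcess_succ {k : ℕ} (h : k < n) :
    bernsteinProcess n v l κ (k + 1) x = bernsteinProcessStep n v l κ k k x := by
  rw [bernsteinProcessStep, bernsteinProcess, bernsteinProcess, ← Real.exp_add, min_eq_left h,
    min_eq_left h.le, sum_range_succ, sum_range_succ]
  congr 1
  ring

theorem bernsteinProcess_le (hκ : 0 ≤ κ) (hx : ∀ j < n, |x j| ≤ 1) (k : ℕ) :
    bernsteinProcess n v l κ k x ≤ Real.exp (2 * |l| * ∑ i ∈ range n, |v i|) := by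
  have hsub : range (min k n) ⊆ range n := range_subset_range.mpr (min_le_right k n)
  have hlin : l * ∑ i ∈ range (min k n), v i * (x i - tailMean n x i) ≤
      2 * |l| * ∑ i ∈ range n, |v i| := by
    calc l * ∑ i ∈ range (min k n), v i * (x i - tailMean n x i)
        ≤ |l| * ∑ i ∈ range (min k n), |v i * (x i - tailMean n x i)| :=
          (le_abs_self _).trans (by rw [abs_mul]; gcongr; exact abs_sum_le_sum_abs _ _)
      _ ≤ |l| * ∑ i ∈ range (min k n), 2 * |v i| := by
          gcongr with i hi
          rw [abs_mul, mul_comm]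
          have hi : i < n := (mem_range.mp hi).trans_le (min_le_right k n)
          exact mul_le_mul_of_nonneg_right (abs_sub_tailMean_le_two hx hi i) (abs_nonneg _)
      _ ≤ |l| * ∑ i ∈ range n, 2 * |v i| := by
          gcongr _ * ?_
          exact sum_le_sum_of_subset_of_nonneg hsub fun _ _ _ => by positivity
      _ = 2 * |l| * ∑ i ∈ range n, |v i| := by rw [← mul_sum]; ring
  have hquad : 0 ≤ κ * ∑ i ∈ range (min k n), v i ^ 2 * tailVar n x i :=
    mul_nonneg hκ (sum_nonneg fun i _ => mul_nonneg (sq_nonneg _) (tailVar_nonneg n x i))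
  exact Real.exp_le_exp.mpr (by linarith)

theorem bernsteinProcessStep_nonneg (k j : ℕ) : 0 ≤ bernsteinProcessStep n v l κ k j x :=
  (mul_pos (bernsteinProcess_pos k) (Real.exp_pos _)).le

theorem bernsteinProcessStep_le (hκ : 0 ≤ κ) (hx : ∀ j < n, |x j| ≤ 1) {j : ℕ} (hj : j < n)
    (k : ℕ) : bernsteinProcessStep n v l κ k j x ≤
      Real.exp (2 * |l| * ∑ i ∈ range n, |v i|) * Real.exp (2 * |l * v k|) := by
  have hlin : l * v k * (x j - tailMean n x k) ≤ 2 * |l * v k| :=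
    calc l * v k * (x j - tailMean n x k) ≤ |l * v k| * |x j - tailMean n x k| := by
          rw [← abs_mul]; exact le_abs_self _
      _ ≤ |l * v k| * 2 := by gcongr; exact abs_sub_tailMean_le_two hx hj k
      _ = 2 * |l * v k| := mul_comm _ _
  have hquad : 0 ≤ κ * v k ^ 2 * tailVar n x k := by
    have := tailVar_nonneg n x k
    positivity
  exact mul_le_mul (bernsteinProcess_le hκ hx k) (Real.exp_le_exp.mpr (by linarith))
    (Real.exp_pos _).le (Real.exp_pos _).le

theorem inv_mul_sum_bernsteinProcessStep_le (hx : ∀ j < n, |x j| ≤ 1) {c : ℝ} (hc : c < 1)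
    {k : ℕ} (hv : 2 * |l * v k| ≤ 3 * c) :
    ((n : ℝ) - k)⁻¹ * ∑ j ∈ Ico k n, bernsteinProcessStep n v l (l ^ 2 / (2 * (1 - c))) k j x ≤
      bernsteinProcess n v l (l ^ 2 / (2 * (1 - c))) k x := by
  set κ := l ^ 2 / (2 * (1 - c))
  set M := bernsteinProcess n v l κ k x
  set q := κ * v k ^ 2 * tailVar n x k
  have hstep (j : ℕ) : bernsteinProcessStep n v l κ k j x =
      M * Real.exp (-q) * Real.exp (l * v k * (x j - tailMean n x k)) := by
    rw [bernsteinProcessStep, mul_assoc M, ← Real.exp_add, neg_add_eq_sub]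
  have havg : ((n : ℝ) - k)⁻¹ * ∑ j ∈ Ico k n, Real.exp (l * v k * (x j - tailMean n x k)) ≤
      Real.exp q := by
    convert inv_mul_sum_exp_sub_tailMean_le hx hc hv k using 2
    ring
  have hM : 0 < M := bernsteinProcess_pos k
  calc ((n : ℝ) - k)⁻¹ * ∑ j ∈ Ico k n, bernsteinProcessStep n v l κ k j x
      = M * Real.exp (-q) *
          (((n : ℝ) - k)⁻¹ * ∑ j ∈ Ico k n, Real.exp (l * v k * (x j - tailMean n x k))) := by
        simp only [hstep, ← mul_sum]
        ring
    _ ≤ M * Real.exp (-q) * Real.exp q := by gcongr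
    _ = M := by rw [mul_assoc, ← Real.exp_add, neg_add_cancel, Real.exp_zero, mul_one]

end BernsteinProcess

noncomputable abbrev meanVarPrefixSigma {Ω : Type*} (n : ℕ) (X : ℕ → Ω → ℝ) (k : ℕ) :
    MeasurableSpace Ω :=
  MeasurableSpace.comap (fun ω => (n : ℝ)⁻¹ * ∑ j ∈ range n, X j ω) inferInstance ⊔
    MeasurableSpace.comap (fun ω => tailVar n (X · ω) 0) inferInstance ⊔
    ⨆ i ∈ range (min k n), MeasurableSpace.comap (X i) inferInstance

section Sigma

variable {Ω : Type*} {n : ℕ} {X : ℕ → Ω → ℝ} {k : ℕ}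

theorem measurable_mean_meanVarPrefixSigma :
    Measurable[meanVarPrefixSigma n X k] fun ω => (n : ℝ)⁻¹ * ∑ j ∈ range n, X j ω :=
  measurable_iff_comap_le.mpr (le_sup_left.trans le_sup_left)

theorem measurable_tailVar_zero_meanVarPrefixSigma :
    Measurable[meanVarPrefixSigma n X k] fun ω => tailVar n (X · ω) 0 :=
  measurable_iff_comap_le.mpr (le_sup_right.trans le_sup_left)

theorem measurable_meanVarPrefixSigma_of_lt {i : ℕ} (hi : i < min k n) :
    Measurable[meanVarPrefixSigma n X k] (X i) :=
  measurable_iff_comap_le.mpr <| (le_iSup₂ (f := fun i (_ : i ∈ range (min k n)) =>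
    MeasurableSpace.comap (X i) inferInstance) i (mem_range.mpr hi)).trans le_sup_right

theorem measurable_sum_range_min_meanVarPrefixSigma {i : ℕ} (hi : i ≤ k) {f : ℝ → ℝ}
    (hf : Measurable f) :
    Measurable[meanVarPrefixSigma n X k] fun ω => ∑ j ∈ range (min i n), f (X j ω) :=
  Finset.measurable_sum _ fun _ hj => hf.comp <| measurable_meanVarPrefixSigma_of_lt <|
    (mem_range.mp hj).trans_le (min_le_min_right n hi)

theorem measurable_tailMean_meanVarPrefixSigma {i : ℕ} (hi : i ≤ k) :
    Measurable[meanVarPrefixSigma n X k] fun ω => tailMean n (X · ω) i := by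
  have h := measurable_sum_range_min_meanVarPrefixSigma (X := X) (n := n) hi measurable_id
  simp_rw [tailMean, sum_Ico_eq_sum_range_sub_sum_range_min, sum_range_eq_mul_tailMean_zero n,
    tailMean_zero]
  exact ((measurable_mean_meanVarPrefixSigma.const_mul _).sub h).const_mul _

theorem measurable_tailVar_meanVarPrefixSigma {i : ℕ} (hi : i ≤ k) :
    Measurable[meanVarPrefixSigma n X k] fun ω => tailVar n (X · ω) i := by
  have h := measurable_sum_range_min_meanVarPrefixSigma (X := X) (n := n) hi
    (measurable_id.pow_const 2)
  simp_rw [tailVar_eq n _ i, sum_Ico_eq_sum_range_sub_sum_range_min, sum_range_sq_eq n,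
    tailMean_zero n _]
  exact ((((measurable_tailVar_zero_meanVarPrefixSigma.add
    (measurable_mean_meanVarPrefixSigma.pow_const 2)).const_mul _).sub h).const_mul _).sub
    ((measurable_tailMean_meanVarPrefixSigma hi).pow_const 2)

theorem measurable_bernsteinProcess_meanVarPrefixSigma (v : ℕ → ℝ) (l κ : ℝ) :
    Measurable[meanVarPrefixSigma n X k] fun ω => bernsteinProcess n v l κ k (X · ω) := by
  have hlt {i} (hi : i ∈ range (min k n)) : i ≤ k :=
    ((mem_range.mp hi).trans_le (min_le_left k n)).le
  refine Real.measurable_exp.comp (Measurable.sub ?_ ?_)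
  · exact (Finset.measurable_sum _ fun i hi =>
      ((measurable_meanVarPrefixSigma_of_lt (mem_range.mp hi)).sub
        (measurable_tailMean_meanVarPrefixSigma (hlt hi))).const_mul _).const_mul _
  · exact (Finset.measurable_sum _ fun i hi =>
      (measurable_tailVar_meanVarPrefixSigma (hlt hi)).const_mul _).const_mul _

theorem meanVarPrefixSigma_le {m : MeasurableSpace Ω} (hX : ∀ i, Measurable (X i)) :
    meanVarPrefixSigma n X k ≤ m := by
  refine sup_le (sup_le ?_ ?_) (iSup₂_le fun i _ => (hX i).comap_le)
  · exact Measurable.comap_le (by fun_prop)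
  · exact Measurable.comap_le (by unfold tailVar tailMean; fun_prop)

end Sigma

theorem integral_mul_comp_eq_of_map_comp_eq {Ω E F : Type*} {m : MeasurableSpace Ω}
    [MeasurableSpace E] [MeasurableSpace F] {P : Measure Ω} {Y : Ω → E} {T : E → E} {g : E → F}
    {Z : Ω → ℝ} {f : E → ℝ} (hY : Measurable Y) (hT : Measurable T) (hg : Measurable g)
    (hmap : P.map (fun ω => T (Y ω)) = P.map Y) (hgT : ∀ x, g (T x) = g x)
    (hZ : Measurable[MeasurableSpace.comap (fun ω => g (Y ω)) inferInstance] Z)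
    (hf : Measurable f) :
    ∫ ω, Z ω * f (T (Y ω)) ∂P = ∫ ω, Z ω * f (Y ω) ∂P := by
  obtain ⟨h, hh, rfl⟩ := hZ.exists_eq_measurable_comp
  have hA : Measurable fun x => h (g x) * f x := (hh.comp hg).mul hf
  calc ∫ ω, h (g (Y ω)) * f (T (Y ω)) ∂P = ∫ ω, h (g (T (Y ω))) * f (T (Y ω)) ∂P := by
        simp only [hgT]
    _ = ∫ x, h (g x) * f x ∂P.map (fun ω => T (Y ω)) :=
        (integral_map (hT.comp hY).aemeasurable hA.aestronglyMeasurable).symm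
    _ = ∫ ω, h (g (Y ω)) * f (Y ω) ∂P := by
        rw [hmap, integral_map hY.aemeasurable hA.aestronglyMeasurable]

noncomputable def powerSumsPrefix (n k : ℕ) (x : Fin n → ℝ) : ℝ × ℝ × (Fin n → ℝ) :=
  (∑ i, x i, ∑ i, x i ^ 2, fun i => if (i : ℕ) < k then x i else 0)

section PowerSumsPrefix

variable {n k : ℕ}

theorem measurable_powerSumsPrefix : Measurable (powerSumsPrefix n k) := by
  refine (by fun_prop : Measurable fun x : Fin n → ℝ => ∑ i, x i).prodMk
    ((by fun_prop : Measurable fun x : Fin n → ℝ => ∑ i, x i ^ 2).prodMk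
      (measurable_pi_lambda _ fun i => ?_))
  split_ifs
  · exact measurable_pi_apply i
  · exact measurable_const

theorem powerSumsPrefix_comp_swap {a b : Fin n} (ha : k ≤ a) (hb : k ≤ b) (x : Fin n → ℝ) :
    powerSumsPrefix n k (x ∘ Equiv.swap a b) = powerSumsPrefix n k x := by
  simp only [powerSumsPrefix, Function.comp_apply, Equiv.sum_comp (Equiv.swap a b) (fun i => x i),
    Equiv.sum_comp (Equiv.swap a b) (fun i => x i ^ 2)]
  congr 2
  funext i
  split_ifs with hi
  · rw [Equiv.swap_apply_of_ne_of_ne (Fin.ne_of_lt (hi.trans_le ha))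
      (Fin.ne_of_lt (hi.trans_le hb))]
  · rfl

theorem meanVarPrefixSigma_le_comap_powerSumsPrefix {Ω : Type*} (X : ℕ → Ω → ℝ) :
    meanVarPrefixSigma n X k ≤ MeasurableSpace.comap
      (fun ω => powerSumsPrefix n k fun i : Fin n => X i ω) inferInstance := by
  set Φ := fun ω => powerSumsPrefix n k fun i : Fin n => X i ω
  have hΦ : Measurable[MeasurableSpace.comap Φ inferInstance] Φ := comap_measurable Φ
  refine sup_le (sup_le ?_ ?_) (iSup₂_le fun i hi => ?_)
  · have : (fun ω => (n : ℝ)⁻¹ * ∑ j ∈ range n, X j ω) = fun ω => (n : ℝ)⁻¹ * (Φ ω).1 :=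
      funext fun ω => by simp [Φ, powerSumsPrefix, Fin.sum_univ_eq_sum_range (X · ω)]
    exact Measurable.comap_le (this ▸ hΦ.fst.const_mul _)
  · have : (fun ω => tailVar n (X · ω) 0) =
        fun ω => (n : ℝ)⁻¹ * (Φ ω).2.1 - ((n : ℝ)⁻¹ * (Φ ω).1) ^ 2 :=
      funext fun ω => by simp [Φ, powerSumsPrefix, tailVar_zero, Fin.sum_univ_eq_sum_range (X · ω),
        Fin.sum_univ_eq_sum_range (X · ω ^ 2)]
    exact Measurable.comap_le
      (this ▸ (hΦ.snd.fst.const_mul _).sub ((hΦ.fst.const_mul _).pow_const 2))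
  · have hi : i < min k n := mem_range.mp hi
    have : X i = fun ω => (Φ ω).2.2 ⟨i, hi.trans_le (min_le_right k n)⟩ :=
      funext fun ω => by simp [Φ, powerSumsPrefix, hi.trans_le (min_le_left k n)]
    exact Measurable.comap_le (this ▸ (measurable_pi_apply _).comp hΦ.snd.snd)

end PowerSumsPrefix

theorem integral_mul_comp_eq_of_exchangeable {Ω : Type*} {m : MeasurableSpace Ω} {P : Measure Ω}
    {n : ℕ} {X : ℕ → Ω → ℝ} (hX : ∀ i, Measurable (X i))
    (hexch : ∀ π : Equiv.Perm (Fin n),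
      Measure.map (fun ω => fun i : Fin n => X (π i).val ω) P =
        Measure.map (fun ω => fun i : Fin n => X i.val ω) P)
    {k j : ℕ} (hkj : k ≤ j) (hjn : j < n) {Z : Ω → ℝ}
    (hZ : Measurable[meanVarPrefixSigma n X k] Z) {f : ℝ → ℝ} (hf : Measurable f) :
    ∫ ω, Z ω * f (X j ω) ∂P = ∫ ω, Z ω * f (X k ω) ∂P := by
  have hk : k < n := hkj.trans_lt hjn
  let π := Equiv.swap (⟨k, hk⟩ : Fin n) ⟨j, hjn⟩
  have h := integral_mul_comp_eq_of_map_comp_eq (P := P) (Y := fun ω (i : Fin n) => X i ω)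
    (T := fun x => x ∘ π) (f := fun x => f (x ⟨k, hk⟩)) (measurable_pi_lambda _ fun i => hX i)
    (by fun_prop) measurable_powerSumsPrefix (hexch π) (powerSumsPrefix_comp_swap le_rfl hkj)
    (hZ.mono (meanVarPrefixSigma_le_comap_powerSumsPrefix X) le_rfl)
    (hf.comp (measurable_pi_apply _))
  simpa [π, Equiv.swap_apply_left] using h

section Supermartingale

variable {Ω : Type*} {m : MeasurableSpace Ω} {P : Measure Ω} {n : ℕ} {X : ℕ → Ω → ℝ}
  {v : ℕ → ℝ} {l κ : ℝ}

theorem integrable_bernsteinProcess [IsFiniteMeasure P] (hX : ∀ i, Measurable (X i))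
    (hbdd : ∀ i < n, ∀ ω, |X i ω| ≤ 1) (hκ : 0 ≤ κ) (k : ℕ) :
    Integrable (fun ω => bernsteinProcess n v l κ k (X · ω)) P := by
  refine Integrable.of_bound ((measurable_bernsteinProcess_meanVarPrefixSigma v l κ).mono
    (meanVarPrefixSigma_le hX) le_rfl).aestronglyMeasurable
    (Real.exp (2 * |l| * ∑ i ∈ range n, |v i|)) (ae_of_all _ fun ω => ?_)
  rw [Real.norm_of_nonneg (bernsteinProcess_pos k).le]
  exact bernsteinProcess_le hκ (fun j hj => hbdd j hj ω) k

theorem integrable_bernsteinProcessStep [IsFiniteMeasure P] (hX : ∀ i, Measurable (X i))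
    (hbdd : ∀ i < n, ∀ ω, |X i ω| ≤ 1) (hκ : 0 ≤ κ) {j : ℕ} (hj : j < n) (k : ℕ) :
    Integrable (fun ω => bernsteinProcessStep n v l κ k j (X · ω)) P := by
  refine Integrable.of_bound (Measurable.aestronglyMeasurable ?_)
    (Real.exp (2 * |l| * ∑ i ∈ range n, |v i|) * Real.exp (2 * |l * v k|))
    (ae_of_all _ fun ω => ?_)
  · unfold bernsteinProcessStep bernsteinProcess tailVar tailMean
    fun_prop
  · rw [Real.norm_of_nonneg (bernsteinProcessStep_nonneg k j)]
    exact bernsteinProcessStep_le hκ (fun i hi => hbdd i hi ω) hj k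

theorem setIntegral_bernsteinProcessStep_eq (hX : ∀ i, Measurable (X i))
    (hexch : ∀ π : Equiv.Perm (Fin n),
      Measure.map (fun ω => fun i : Fin n => X (π i).val ω) P =
        Measure.map (fun ω => fun i : Fin n => X i.val ω) P)
    {k j : ℕ} (hkj : k ≤ j) (hjn : j < n) {s : Set Ω}
    (hs : MeasurableSet[meanVarPrefixSigma n X k] s) :
    ∫ ω in s, bernsteinProcessStep n v l κ k j (X · ω) ∂P =
      ∫ ω in s, bernsteinProcessStep n v l κ k k (X · ω) ∂P := by
  set Z := s.indicator fun ω => bernsteinProcess n v l κ k (X · ω) *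
    Real.exp (-(l * v k * tailMean n (X · ω) k) - κ * v k ^ 2 * tailVar n (X · ω) k)
  have hZ : Measurable[meanVarPrefixSigma n X k] Z :=
    ((measurable_bernsteinProcess_meanVarPrefixSigma v l κ).mul (Real.measurable_exp.comp
      (((measurable_tailMean_meanVarPrefixSigma le_rfl).const_mul _).neg.sub
        ((measurable_tailVar_meanVarPrefixSigma le_rfl).const_mul _)))).indicator hs
  have hfactor (i : ℕ) : s.indicator (fun ω => bernsteinProcessStep n v l κ k i (X · ω)) =
      fun ω => Z ω * Real.exp (l * v k * X i ω) := by
    funext ω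
    by_cases hω : ω ∈ s
    · simp only [Z, bernsteinProcessStep, Set.indicator_of_mem hω, mul_assoc, ← Real.exp_add]
      congr 2
      ring
    · simp [Z, hω]
  have hsm : MeasurableSet s := meanVarPrefixSigma_le hX s hs
  rw [← integral_indicator hsm, ← integral_indicator hsm, hfactor, hfactor]
  exact integral_mul_comp_eq_of_exchangeable hX hexch hkj hjn hZ
    (f := fun y => Real.exp (l * v k * y)) (by fun_prop)

theorem setIntegral_bernsteinProcess_succ_le [IsFiniteMeasure P] (hX : ∀ i, Measurable (X i))
    (hexch : ∀ π : Equiv.Perm (Fin n),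
      Measure.map (fun ω => fun i : Fin n => X (π i).val ω) P =
        Measure.map (fun ω => fun i : Fin n => X i.val ω) P)
    (hbdd : ∀ i < n, ∀ ω, |X i ω| ≤ 1) {c : ℝ} (hc : c < 1)
    (hv : ∀ i < n, 2 * |l * v i| ≤ 3 * c) {k : ℕ} {s : Set Ω}
    (hs : MeasurableSet[meanVarPrefixSigma n X k] s) :
    ∫ ω in s, bernsteinProcess n v l (l ^ 2 / (2 * (1 - c))) (k + 1) (X · ω) ∂P ≤
      ∫ ω in s, bernsteinProcess n v l (l ^ 2 / (2 * (1 - c))) k (X · ω) ∂P := by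
  set κ := l ^ 2 / (2 * (1 - c))
  rcases le_or_gt n k with hnk | hkn
  · simp only [bernsteinProcess_succ_of_le hnk, le_rfl]
  have hκ : 0 ≤ κ := div_nonneg (sq_nonneg l) (by linarith)
  have hint : ∀ j ∈ Ico k n,
      IntegrableOn (fun ω => bernsteinProcessStep n v l κ k j (X · ω)) s P :=
    fun j hj => (integrable_bernsteinProcessStep hX hbdd hκ (mem_Ico.mp hj).2 k).integrableOn
  have hcard : ((n : ℝ) - k)⁻¹ * #(Ico k n) = 1 := by
    rw [cast_card_Ico hkn.le, inv_mul_cancel₀ (sub_ne_zero.mpr (by exact_mod_cast hkn.ne'))]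
  calc ∫ ω in s, bernsteinProcess n v l κ (k + 1) (X · ω) ∂P
      = ((n : ℝ) - k)⁻¹ * ∑ j ∈ Ico k n,
          ∫ ω in s, bernsteinProcessStep n v l κ k j (X · ω) ∂P := by
        rw [sum_congr rfl fun j hj => setIntegral_bernsteinProcessStep_eq hX hexch
          (mem_Ico.mp hj).1 (mem_Ico.mp hj).2 hs, sum_const, nsmul_eq_mul, ← mul_assoc, hcard,
          one_mul]
        simp only [bernsteinProcess_succ hkn]
    _ = ∫ ω in s, ((n : ℝ) - k)⁻¹ * ∑ j ∈ Ico k n, bernsteinProcessStep n v l κ k j (X · ω) ∂P := by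
        rw [integral_const_mul, integral_finsetSum _ hint]
    _ ≤ ∫ ω in s, bernsteinProcess n v l κ k (X · ω) ∂P :=
        setIntegral_mono_on ((integrable_finsetSum _ hint).const_mul _)
          (integrable_bernsteinProcess hX hbdd hκ k).integrableOn
          (meanVarPrefixSigma_le hX s hs)
          fun ω _ => inv_mul_sum_bernsteinProcessStep_le (fun j hj => hbdd j hj ω) hc (hv k hkn)

end Supermartingale

/-- The Bernstein-type supermartingale for exchangeable sequences (Proposition 2 of
the paper): the process `M_k = exp(λ ∑_{i≤k} v_i (X_i - X̄_{≥i}) -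
λ²/(2(1 - (2|λ|/3)‖v‖_∞)) ∑_{i≤k} v_i² σ²_{X_{≥i}})` is a supermartingale with respect
to the filtration generated by `X̄, σ²_X, X_1, …, X_k`, so `E[M_n] ≤ 1`. -/
theorem bernstein_supermartingale_exchangeable {Ω : Type*} {m : MeasurableSpace Ω}
    (P : Measure Ω) [IsProbabilityMeasure P] (n : ℕ) (hn : 1 ≤ n) (v : ℕ → ℝ)
    (X : ℕ → Ω → ℝ)
    (hmeas : ∀ i, Measurable (X i))
    (hbdd : ∀ i < n, ∀ ω, X i ω ∈ Set.Icc (-1 : ℝ) 1)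
    (hexch : ∀ π : Equiv.Perm (Fin n),
      Measure.map (fun ω => fun i : Fin n => X (π i).val ω) P =
        Measure.map (fun ω => fun i : Fin n => X i.val ω) P)
    (vinf : ℝ)
    (hvinf : vinf = (Finset.range n).sup'
      (Finset.nonempty_range_iff.mpr (by omega)) fun i => |v i|)
    (l : ℝ) (hl : |l| < 3 / (2 * vinf))
    (Xbar : Ω → ℝ) (hXbar : ∀ ω, Xbar ω = (n : ℝ)⁻¹ * ∑ j ∈ Finset.range n, X j ω)
    (meanFrom : ℕ → Ω → ℝ)
    (hmeanFrom : ∀ i ω, meanFrom i ω = ((n : ℝ) - i)⁻¹ * ∑ j ∈ Finset.Ico i n, X j ω)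
    (varFrom : ℕ → Ω → ℝ)
    (hvarFrom : ∀ i ω, varFrom i ω =
      ((n : ℝ) - i)⁻¹ * ∑ j ∈ Finset.Ico i n, (X j ω - meanFrom i ω) ^ 2)
    (M : ℕ → Ω → ℝ)
    (hM : ∀ k ω, M k ω = Real.exp (l * ∑ i ∈ Finset.range (min k n),
        v i * (X i ω - meanFrom i ω) -
      l ^ 2 / (2 * (1 - 2 * |l| / 3 * vinf)) *
        ∑ i ∈ Finset.range (min k n), (v i) ^ 2 * varFrom i ω))
    (ℱ : Filtration ℕ m)
    (hℱ : ∀ k, ℱ k =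
      MeasurableSpace.comap Xbar inferInstance ⊔
        MeasurableSpace.comap (varFrom 0) inferInstance ⊔
        ⨆ i ∈ Finset.range (min k n), MeasurableSpace.comap (X i) inferInstance) :
    Supermartingale M ℱ P ∧ ∫ ω, M n ω ∂P ≤ 1 := by
  set c := 2 * |l| / 3 * vinf
  have hc : c < 1 := two_mul_abs_div_three_mul_lt_one hl
  have hv (i : ℕ) (hi : i < n) : 2 * |l * v i| ≤ 3 * c := by
    have : |v i| ≤ vinf := hvinf ▸ le_sup' (fun i => |v i|) (mem_range.mpr hi)
    rw [abs_mul]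
    simp only [c]
    nlinarith [abs_nonneg l]
  have hX (i : ℕ) (hi : i < n) (ω : Ω) : |X i ω| ≤ 1 := abs_le.mpr (hbdd i hi ω)
  obtain rfl : Xbar = _ := funext hXbar
  obtain rfl : meanFrom = fun i ω => tailMean n (X · ω) i := funext₂ hmeanFrom
  obtain rfl : varFrom = fun i ω => tailVar n (X · ω) i := funext₂ hvarFrom
  set κ := l ^ 2 / (2 * (1 - c))
  have hκ : 0 ≤ κ := div_nonneg (sq_nonneg l) (by linarith)
  obtain rfl : M = fun k ω => bernsteinProcess n v l κ k (X · ω) := funext₂ hM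
  have hsuper : Supermartingale (fun k ω => bernsteinProcess n v l κ k (X · ω)) ℱ P :=
    supermartingale_of_setIntegral_succ_le
      (fun k => hℱ k ▸ (measurable_bernsteinProcess_meanVarPrefixSigma v l κ).stronglyMeasurable)
      (integrable_bernsteinProcess hmeas hX hκ)
      fun k s hs => setIntegral_bernsteinProcess_succ_le hmeas hexch hX hc hv (by rwa [hℱ k] at hs)
  refine ⟨hsuper, ?_⟩
  simpa [bernsteinProcess_zero] using hsuper.setIntegral_le n.zero_le MeasurableSet.univ
end

section
/- For $n \ge 2$, define $B_n \in \mathbb{R}^{n\times n}$ with $i$th row $(\mathbf{0}_{i-1}, \frac{1}{n+1-i}\mathbf{1}_{n+1-i})$, and $A_n \in \mathbb{R}^{n\times n}$ with $i$th row $(\mathbf{0}_{i-1}, 1, -\frac{1}{n-i}\mathbf{1}_{n-i})$ for $i \le n-1$ and $n$th row zero. Then $A_n^\top (I_n - B_n) = \mathcal{P}^\perp_{\mathbf{1}_n}$, the orthogonal projection onto the subspace orthogonal to the all-ones vector $\mathbf{1}_n$. -/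
open Matrix

/-- The running-mean matrix `B_n`, whose `i`th row is `(0,…,0, 1/(n+1-i),…,1/(n+1-i))`
(rows and columns indexed from `0`). -/
noncomputable def matB (n : ℕ) : Matrix (Fin n) (Fin n) ℝ :=
  Matrix.of fun i j => if i ≤ j then ((n : ℝ) - i)⁻¹ else 0

/-- The matrix `A_n`, whose `i`th row is `(0,…,0, 1, -1/(n-i),…,-1/(n-i))` for
`i < n-1` (0-indexed), with last row zero. -/
noncomputable def matA (n : ℕ) : Matrix (Fin n) (Fin n) ℝ :=
  Matrix.of fun i j =>
    if (i : ℕ) = n - 1 then 0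
    else if j = i then 1
    else if i < j then -(((n : ℝ) - 1 - i)⁻¹) else 0

/-- Orthogonal projection onto the complement of the all-ones vector. -/
noncomputable def projPerpOnes (n : ℕ) : Matrix (Fin n) (Fin n) ℝ :=
  1 - Matrix.of fun _ _ => (n : ℝ)⁻¹

/-! `M_n = diag(n - k) - U_n`, with `U_n` the upper-triangular matrix of ones, is a common factor:
`1 - B_n = diag(n - k)⁻¹ M_n` and `A_n = diag(n - 1 - k)⁻¹ M_n` (the last row of `M_n` vanishes).
Hence `A_nᵀ (1 - B_n) = M_nᵀ W M_n` with weights `w_k = 1/((n - 1 - k)(n - k))`, and since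
`w_k = 1/(n - 1 - k) - 1/(n - k)` telescopes to `∑_{k < i} w_k = 1/(n - i) - 1/n`, the inner
products of the columns of `M_n` under `W` come out as `1 - 1/n` and `-1/n`. -/

open Finset

/-- Column `i` of `M_n`, as a function of the row index `k`. -/
noncomputable def colM (n i k : ℕ) : ℝ :=
  if k < i then -1 else if k = i then (n : ℝ) - 1 - i else 0

noncomputable def matM (n : ℕ) : Matrix (Fin n) (Fin n) ℝ :=
  Matrix.of fun k i => colM n i k

lemma one_sub_matB_eq_diagonal_mul_matM (n : ℕ) :
    1 - matB n = diagonal (fun k : Fin n => ((n : ℝ) - k)⁻¹) * matM n := by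
  ext k i
  have hk : (n : ℝ) - k ≠ 0 := by linarith [show (k : ℝ) + 1 ≤ n by exact_mod_cast k.isLt]
  simp only [Matrix.sub_apply, one_apply, matB, matM, colM, diagonal_mul, of_apply, Fin.ext_iff,
    Fin.le_def]
  split_ifs with h <;> try first | omega | simp
  obtain rfl : k = i := Fin.ext h
  field_simp
  ring

lemma matA_eq_diagonal_mul_matM (n : ℕ) :
    matA n = diagonal (fun k : Fin n => ((n : ℝ) - 1 - k)⁻¹) * matM n := by
  ext k i
  simp only [matA, matM, colM, diagonal_mul, of_apply, Fin.ext_iff, Fin.lt_def]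
  split_ifs with hlast _ _ hdiag <;> try first | omega | simp
  · left
    rw [hlast, Nat.cast_pred (by omega)]
    ring
  · obtain rfl : k = i := (Fin.ext hdiag).symm
    have hk : (k : ℝ) + 1 < n := by exact_mod_cast (by omega : (k : ℕ) + 1 < n)
    field_simp [show (n : ℝ) - 1 - k ≠ 0 by linarith]

lemma sum_range_inv_mul_inv {n m : ℕ} (hm : m < n) :
    ∑ k ∈ range m, ((n : ℝ) - 1 - k)⁻¹ * ((n : ℝ) - k)⁻¹ = ((n : ℝ) - m)⁻¹ - (n : ℝ)⁻¹ := by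
  induction m with
  | zero => simp
  | succ m ih =>
    have hm' : (m : ℝ) + 1 < n := by exact_mod_cast hm
    have hstep : ((n : ℝ) - 1 - m)⁻¹ * ((n : ℝ) - m)⁻¹ = ((n : ℝ) - 1 - m)⁻¹ - ((n : ℝ) - m)⁻¹ := by
      field_simp [show (n : ℝ) - 1 - m ≠ 0 by linarith, show (n : ℝ) - m ≠ 0 by linarith]
      ring
    rw [sum_range_succ, ih (by omega), hstep, Nat.cast_succ, sub_add_eq_sub_sub]
    ring

lemma sum_weight_mul_colM_mul_colM {n i j : ℕ} (hij : i ≤ j) (hj : j < n) :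
    ∑ k ∈ range n, ((n : ℝ) - 1 - k)⁻¹ * ((n : ℝ) - k)⁻¹ * colM n i k * colM n j k
      = (if i = j then 1 else 0) - (n : ℝ)⁻¹ := by
  have hsupp : ∀ k ∈ range n, k ∉ range (i + 1) →
      ((n : ℝ) - 1 - k)⁻¹ * ((n : ℝ) - k)⁻¹ * colM n i k * colM n j k = 0 := by
    intro k _ hk
    simp only [mem_range] at hk
    simp [colM, show ¬k < i by omega, show k ≠ i by omega]
  have hbelow : ∑ k ∈ range i, ((n : ℝ) - 1 - k)⁻¹ * ((n : ℝ) - k)⁻¹ * colM n i k * colM n j k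
      = ((n : ℝ) - i)⁻¹ - (n : ℝ)⁻¹ := by
    rw [← sum_range_inv_mul_inv (by omega : i < n)]
    refine sum_congr rfl fun k hk => ?_
    simp only [mem_range] at hk
    simp [colM, hk, show k < j by omega]
  rw [← sum_subset (range_subset_range.2 (by omega : i + 1 ≤ n)) hsupp, sum_range_succ, hbelow]
  have hi : (i : ℝ) + 1 ≤ n := by exact_mod_cast (by omega : i + 1 ≤ n)
  rcases hij.eq_or_lt with rfl | hlt
  · simp only [colM, lt_irrefl, if_false, if_true]
    -- `n - 1 - i` vanishes when `i = n - 1`, so it must not be cancelled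
    rw [mul_right_comm ((n : ℝ) - 1 - i)⁻¹, mul_right_comm (((n : ℝ) - 1 - i)⁻¹ * _),
      inv_mul_mul_self]
    field_simp [show (n : ℝ) - i ≠ 0 by linarith]
    ring
  · have hi' : (i : ℝ) + 1 < n := by exact_mod_cast (by omega : i + 1 < n)
    simp only [colM, lt_irrefl, if_false, if_true, hlt, hlt.ne]
    field_simp [show (n : ℝ) - i ≠ 0 by linarith, show (n : ℝ) - 1 - i ≠ 0 by linarith]
    ring

lemma matM_transpose_mul_diagonal_mul_matM (n : ℕ) :
    (matM n)ᵀ * diagonal (fun k : Fin n => ((n : ℝ) - 1 - k)⁻¹ * ((n : ℝ) - k)⁻¹) * matM n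
      = projPerpOnes n := by
  ext i j
  have hentry : ∀ i j : Fin n,
      ((matM n)ᵀ * diagonal (fun k : Fin n => ((n : ℝ) - 1 - k)⁻¹ * ((n : ℝ) - k)⁻¹) * matM n) i j
        = ∑ k ∈ range n, ((n : ℝ) - 1 - k)⁻¹ * ((n : ℝ) - k)⁻¹ * colM n i k * colM n j k := by
    intro i j
    rw [← Fin.sum_univ_eq_sum_range (fun k => ((n : ℝ) - 1 - k)⁻¹ * ((n : ℝ) - k)⁻¹ *
      colM n i k * colM n j k), mul_apply]
    simp only [mul_diagonal, transpose_apply, matM, of_apply]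
    exact sum_congr rfl fun k _ => by ring
  simp only [projPerpOnes, Matrix.sub_apply, one_apply, of_apply, Fin.ext_iff]
  rcases le_total i j with hij | hji
  · rw [hentry, sum_weight_mul_colM_mul_colM hij j.isLt]
  · rw [hentry]
    convert sum_weight_mul_colM_mul_colM hji i.isLt using 1
    · exact sum_congr rfl fun k _ => mul_right_comm _ _ _
    · simp only [eq_comm]

theorem matA_transpose_mul_id_sub_matB_general (n : ℕ) :
    (matA n)ᵀ * (1 - matB n) = projPerpOnes n := by
  rw [matA_eq_diagonal_mul_matM, one_sub_matB_eq_diagonal_mul_matM, transpose_mul,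
    diagonal_transpose, Matrix.mul_assoc, ← Matrix.mul_assoc (diagonal _), diagonal_mul_diagonal,
    ← Matrix.mul_assoc]
  exact matM_transpose_mul_diagonal_mul_matM n

/-- `A_nᵀ (I - B_n)` is the projection orthogonal to the all-ones vector. -/
theorem matA_transpose_mul_id_sub_matB (n : ℕ) (hn : 2 ≤ n) :
    (matA n)ᵀ * (1 - matB n) = projPerpOnes n :=
  matA_transpose_mul_id_sub_matB_general n
end

section
/- For $n \ge 2$, let $B_n \in \mathbb{R}^{n\times n}$ have $i$th row $(\mathbf{0}_{i-1}, \frac{1}{n+1-i}\mathbf{1}_{n+1-i})$. Then $\frac{1}{n!}\sum_{\Pi} \Pi^\top B_n \Pi = I_n - \frac{n - H_n}{n-1}\mathcal{P}^\perp_{\mathbf{1}_n}$, where the sum is over all $n\times n$ permutation matrices, $H_n = \sum_{k=1}^n 1/k$, and $\mathcal{P}^\perp_{\mathbf{1}_n}$ projects orthogonally to the all-ones vector. -/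
open Matrix

/-- The harmonic number `H_n`. -/
noncomputable def harmonic' (n : ℕ) : ℝ := ∑ k ∈ Finset.range n, (1 : ℝ) / (k + 1)


/-!
Conjugating `B_n` by every permutation and summing gives a matrix `M` that is invariant under
simultaneous permutation of rows and columns. The symmetric group acts transitively on indices
and on ordered pairs of distinct indices, so `M` has a constant diagonal and a constant
off-diagonal. Each conjugation preserves the trace and the sum of all entries, which pins down
both constants: `tr B_n = H_n` and every row of `B_n` sums to `1`.
-/

open Equiv Finset

theorem Equiv.Perm.exists_apply_eq_and_apply_eq {ι : Type*} [DecidableEq ι] {i j k l : ι}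
    (hij : i ≠ j) (hkl : k ≠ l) : ∃ τ : Perm ι, τ i = k ∧ τ j = l := by
  refine ⟨swap i k * swap j (swap i k l), ?_, by simp⟩
  have hl : swap i k l ≠ i := fun h => hkl (by simpa using congrArg (swap i k) h.symm)
  simp [swap_apply_of_ne_of_ne hij hl.symm]

namespace Matrix

variable {ι R : Type*}

section Invariant

variable [DecidableEq ι] {M : Matrix ι ι R}

theorem apply_self_eq_of_forall_submatrix_perm_eq (hM : ∀ τ : Perm ι, M.submatrix τ τ = M)
    (i k : ι) : M i i = M k k := by
  simpa using (congrFun₂ (hM (Equiv.swap i k)) i i).symm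

theorem apply_eq_of_forall_submatrix_perm_eq (hM : ∀ τ : Perm ι, M.submatrix τ τ = M)
    {i j k l : ι} (hij : i ≠ j) (hkl : k ≠ l) : M i j = M k l := by
  obtain ⟨τ, rfl, rfl⟩ := Perm.exists_apply_eq_and_apply_eq hij hkl
  exact (congrFun₂ (hM τ) i j).symm

variable [Fintype ι] [AddCommMonoid R]

theorem card_nsmul_apply_self_of_forall_submatrix_perm_eq
    (hM : ∀ τ : Perm ι, M.submatrix τ τ = M) (i : ι) : Fintype.card ι • M i i = trace M := by
  simp [trace, apply_self_eq_of_forall_submatrix_perm_eq hM _ i]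

theorem trace_add_nsmul_apply_of_forall_submatrix_perm_eq
    (hM : ∀ τ : Perm ι, M.submatrix τ τ = M) {i j : ι} (hij : i ≠ j) :
    trace M + (Fintype.card ι * (Fintype.card ι - 1)) • M i j = ∑ k, ∑ l, M k l := by
  have hrow (k : ι) : ∑ l ∈ univ.erase k, M k l = (Fintype.card ι - 1) • M i j := by
    rw [sum_congr rfl fun l hl =>
        apply_eq_of_forall_submatrix_perm_eq hM (ne_of_mem_erase hl).symm hij,
      sum_const, card_erase_of_mem (mem_univ k), card_univ]
  have hoff : (Fintype.card ι * (Fintype.card ι - 1)) • M i j =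
      ∑ k, ∑ l ∈ univ.erase k, M k l := by
    simp [hrow, mul_nsmul']
  simp only [hoff, trace, diag_apply, ← sum_add_distrib, add_sum_erase _ _ (mem_univ _)]

end Invariant

theorem transpose_permMatrix_mul_mul_permMatrix [Fintype ι] [DecidableEq ι] [Semiring R]
    (A : Matrix ι ι R) (σ : Perm ι) :
    (σ.permMatrix R)ᵀ * A * σ.permMatrix R = A.submatrix ⇑σ⁻¹ ⇑σ⁻¹ := by
  rw [transpose_permMatrix, PEquiv.toMatrix_toPEquiv_mul, PEquiv.mul_toMatrix_toPEquiv,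
    submatrix_submatrix]
  rfl

theorem sum_transpose_permMatrix_mul_mul_permMatrix [Fintype ι] [DecidableEq ι] [Semiring R]
    (A : Matrix ι ι R) :
    ∑ σ : Perm ι, (σ.permMatrix R)ᵀ * A * σ.permMatrix R = ∑ σ : Perm ι, A.submatrix σ σ := by
  simp only [transpose_permMatrix_mul_mul_permMatrix]
  exact Fintype.sum_equiv (Equiv.inv _) _ _ fun _ => rfl

section SumPermSubmatrix

variable [Fintype ι] [AddCommMonoid R] (A : Matrix ι ι R)

theorem trace_submatrix_perm (σ : Perm ι) : trace (A.submatrix σ σ) = trace A :=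
  Equiv.sum_comp σ fun i => A i i

theorem sum_sum_submatrix_perm_apply (σ : Perm ι) :
    ∑ i, ∑ j, A.submatrix σ σ i j = ∑ i, ∑ j, A i j :=
  (sum_congr rfl fun i _ => Equiv.sum_comp σ (A (σ i))).trans
    (Equiv.sum_comp σ fun i => ∑ j, A i j)

variable [DecidableEq ι]

theorem submatrix_sum_perm_submatrix (τ : Perm ι) :
    (∑ σ : Perm ι, A.submatrix σ σ).submatrix τ τ = ∑ σ : Perm ι, A.submatrix σ σ := by
  ext i j
  simp only [submatrix_apply, sum_apply]
  exact Fintype.sum_equiv (Equiv.mulRight τ) _ _ fun _ => rfl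

theorem trace_sum_perm_submatrix :
    trace (∑ σ : Perm ι, A.submatrix σ σ) = (Fintype.card ι).factorial • trace A := by
  simp [trace_sum, trace_submatrix_perm, Fintype.card_perm]

theorem sum_sum_sum_perm_submatrix_apply :
    ∑ i, ∑ j, (∑ σ : Perm ι, A.submatrix σ σ) i j =
      (Fintype.card ι).factorial • ∑ i, ∑ j, A i j := by
  simp only [sum_apply]
  rw [(sum_congr rfl fun _ _ => sum_comm).trans sum_comm]
  simp only [sum_sum_submatrix_perm_apply, sum_const, card_univ, Fintype.card_perm]

end SumPermSubmatrix

end Matrix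

theorem trace_matB (n : ℕ) : trace (matB n) = harmonic' n := by
  simp only [trace, diag_apply, matB, of_apply, le_refl, if_true]
  rw [Fin.sum_univ_eq_sum_range (fun k => ((n : ℝ) - k)⁻¹), harmonic', ← sum_range_reflect]
  refine sum_congr rfl fun k hk => ?_
  rw [mem_range] at hk
  rw [one_div, Nat.cast_sub (by omega), Nat.cast_sub (by omega)]
  ring_nf

theorem sum_matB_apply (n : ℕ) (i : Fin n) : ∑ j, matB n i j = 1 := by
  simp only [matB, of_apply]
  rw [← sum_filter, filter_le_eq_Ici, sum_const, Fin.card_Ici, nsmul_eq_mul,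
    Nat.cast_sub i.is_lt.le, mul_inv_cancel₀ (sub_ne_zero.2 (by exact_mod_cast i.is_lt.ne'))]

theorem sum_sum_matB_apply (n : ℕ) : ∑ i, ∑ j, matB n i j = n := by
  simp [sum_matB_apply]

/-- Permutation-averaging identity for the running-mean matrix:
`(1/n!) ∑_Π Πᵀ B_n Π = I - ((n - H_n)/(n-1)) P^⊥_{1_n}`. -/
theorem perm_average_matB (n : ℕ) (hn : 2 ≤ n) :
    ((n.factorial : ℝ))⁻¹ •
        ∑ π : Equiv.Perm (Fin n), (π.permMatrix ℝ)ᵀ * matB n * π.permMatrix ℝ =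
      1 - (((n : ℝ) - harmonic' n) / ((n : ℝ) - 1)) • projPerpOnes n := by
  set M := ∑ σ : Perm (Fin n), (matB n).submatrix σ σ
  have hM : ∀ τ : Perm (Fin n), M.submatrix τ τ = M := submatrix_sum_perm_submatrix _
  have htrace : trace M = n.factorial * harmonic' n := by
    rw [trace_sum_perm_submatrix, trace_matB, Fintype.card_fin, nsmul_eq_mul]
  have htotal : ∑ k, ∑ l, M k l = n.factorial * n := by
    rw [sum_sum_sum_perm_submatrix_apply, sum_sum_matB_apply, Fintype.card_fin, nsmul_eq_mul]
  have hn0 : (n : ℝ) ≠ 0 := by positivity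
  have hn1 : (n : ℝ) - 1 ≠ 0 := sub_ne_zero.2 (by exact_mod_cast (by omega : n ≠ 1))
  have hfac : (n.factorial : ℝ) ≠ 0 := by positivity
  rw [sum_transpose_permMatrix_mul_mul_permMatrix]
  ext i j
  simp only [Matrix.smul_apply, Matrix.sub_apply, projPerpOnes, of_apply, smul_eq_mul]
  rcases eq_or_ne i j with rfl | hij
  · have h := card_nsmul_apply_self_of_forall_submatrix_perm_eq hM i
    rw [htrace, Fintype.card_fin, nsmul_eq_mul] at h
    rw [one_apply_eq]
    field_simp
    linear_combination h
  · have h := trace_add_nsmul_apply_of_forall_submatrix_perm_eq hM hij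
    rw [htrace, htotal, Fintype.card_fin, nsmul_eq_mul, Nat.cast_mul, Nat.cast_sub (by omega),
      Nat.cast_one] at h
    rw [one_apply_ne hij]
    field_simp
    linear_combination h
end
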